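/- arXiv:2603.28520 — 6 statements merged into one kernel-verified Lean document; each statement's English description precedes it below -/
import Mathlib

section
/- Let ρ be a probability measure, I and J at most countable index sets, and (f_i)_{i∈I}, (g_j)_{j∈J} nonnegative measurable functions with ρ[f_i] > 0 and ρ[g_j] > 0 for all i, j, and suppose all relevant expectations are finite. Then |ρ[Σ_{i,j} f_i g_j] / (ρ[Σ_i f_i] · ρ[Σ_j g_j]) − 1| ≤ sup_{i,j} |ρ[f_i g_j] / (ρ[f_i] ρ[g_j]) − 1|. -/
open MeasureTheory

/-!
Both `ρ[Σ_{i,j} f_i g_j]` and `ρ[Σ_i f_i] ρ[Σ_j g_j]` are sums over the pairs `(i, j)` of the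
nonnegative series `ρ[f_i g_j]` and `ρ[f_i] ρ[g_j]` (term-by-term integration is legitimate because
the partial sums are dominated by the integrable limits). The hypothesis says
`|ρ[f_i g_j] - ρ[f_i] ρ[g_j]| ≤ M ρ[f_i] ρ[g_j]` for every pair, and summing these two-sided bounds
gives `|ρ[F G] - ρ[F] ρ[G]| ≤ M ρ[F] ρ[G]`.
-/

section IntegralOfNonnegSeries

variable {Ω ι : Type*} [MeasurableSpace Ω] {μ : Measure Ω} {u : ι → Ω → ℝ} {U : Ω → ℝ}

theorem integrable_of_hasSum_of_nonneg (hu0 : ∀ i x, 0 ≤ u i x)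
    (hum : ∀ i, AEStronglyMeasurable (u i) μ) (hU : ∀ x, HasSum (fun i => u i x) (U x))
    (hUint : Integrable U μ) (i : ι) : Integrable (u i) μ := by
  refine hUint.mono (hum i) (ae_of_all _ fun x => ?_)
  rw [Real.norm_of_nonneg (hu0 i x)]
  exact (le_hasSum (hU x) i fun j _ => hu0 j x).trans (le_abs_self _)

theorem hasSum_integral_of_hasSum_of_nonneg [Countable ι] (hu0 : ∀ i x, 0 ≤ u i x)
    (hum : ∀ i, AEStronglyMeasurable (u i) μ) (hU : ∀ x, HasSum (fun i => u i x) (U x))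
    (hUint : Integrable U μ) : HasSum (fun i => ∫ x, u i x ∂μ) (∫ x, U x ∂μ) := by
  have hint := integrable_of_hasSum_of_nonneg hu0 hum hU hUint
  have hsummable : Summable fun i => ∫ x, u i x ∂μ := by
    refine summable_of_sum_le (c := ∫ x, U x ∂μ) (fun i => integral_nonneg (hu0 i)) fun s => ?_
    rw [← integral_finsetSum s fun i _ => hint i]
    exact integral_mono (integrable_finsetSum s fun i _ => hint i) hUint
      fun x => sum_le_hasSum s (fun i _ => hu0 i x) (hU x)
  have h := hasSum_integral_of_summable_integral_norm hint
    (by simpa only [Real.norm_of_nonneg (hu0 _ _)] using hsummable)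
  rwa [integral_congr_ae (ae_of_all _ fun x => (hU x).tsum_eq)] at h

end IntegralOfNonnegSeries

theorem HasSum.mul_of_nonneg {ι κ : Type*} {a : ι → ℝ} {b : κ → ℝ} {A B : ℝ}
    (ha : HasSum a A) (hb : HasSum b B) (ha0 : ∀ i, 0 ≤ a i) (hb0 : ∀ j, 0 ≤ b j) :
    HasSum (fun p : ι × κ => a p.1 * b p.2) (A * B) :=
  ha.mul hb (ha.summable.mul_of_nonneg hb.summable ha0 hb0)

theorem abs_div_sub_one_le_of_hasSum {ι : Type*} {a b : ι → ℝ} {A B M : ℝ}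
    (ha : HasSum a A) (hb : HasSum b B) (hb0 : ∀ i, 0 < b i) (hB : 0 < B)
    (hM : ∀ i, |a i / b i - 1| ≤ M) : |A / B - 1| ≤ M := by
  have hterm : ∀ i, |a i - b i| ≤ M * b i := fun i => by
    have h := hM i
    rwa [div_sub_one (hb0 i).ne', abs_div, abs_of_pos (hb0 i), div_le_iff₀ (hb0 i)] at h
  have hdiff := ha.sub hb
  have hupper : A - B ≤ M * B := hasSum_le (fun i => (abs_le.1 (hterm i)).2) hdiff (hb.mul_left M)
  have hlower : -(M * B) ≤ A - B :=
    hasSum_le (fun i => (abs_le.1 (hterm i)).1) (hb.mul_left M).neg hdiff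
  rw [div_sub_one hB.ne', abs_div, abs_of_pos hB, div_le_iff₀ hB]
  exact abs_le.2 ⟨hlower, hupper⟩

theorem stmt0_general {Ω : Type*} [MeasurableSpace Ω] (ρ : Measure Ω)
    {I J : Type*} [Countable I] [Countable J]
    (f : I → Ω → ℝ) (g : J → Ω → ℝ)
    (hf0 : ∀ i x, 0 ≤ f i x) (hg0 : ∀ j x, 0 ≤ g j x)
    (hfm : ∀ i, Measurable (f i)) (hgm : ∀ j, Measurable (g j))
    (hfpos : ∀ i, 0 < ∫ x, f i x ∂ρ) (hgpos : ∀ j, 0 < ∫ x, g j x ∂ρ)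
    (F G : Ω → ℝ)
    (hF : ∀ x, HasSum (fun i => f i x) (F x)) (hG : ∀ x, HasSum (fun j => g j x) (G x))
    (hFint : Integrable F ρ) (hGint : Integrable G ρ)
    (hFGint : Integrable (fun x => F x * G x) ρ)
    (hFpos : 0 < ∫ x, F x ∂ρ) (hGpos : 0 < ∫ x, G x ∂ρ)
    (M : ℝ)
    (hM : ∀ i j,
      |(∫ x, f i x * g j x ∂ρ) / ((∫ x, f i x ∂ρ) * (∫ x, g j x ∂ρ)) - 1| ≤ M) :
    |(∫ x, F x * G x ∂ρ) / ((∫ x, F x ∂ρ) * (∫ x, G x ∂ρ)) - 1| ≤ M := by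
  have hFsum := hasSum_integral_of_hasSum_of_nonneg hf0
    (fun i => (hfm i).aestronglyMeasurable) hF hFint
  have hGsum := hasSum_integral_of_hasSum_of_nonneg hg0
    (fun j => (hgm j).aestronglyMeasurable) hG hGint
  have hFGsum := hasSum_integral_of_hasSum_of_nonneg (μ := ρ)
    (u := fun p : I × J => fun x => f p.1 x * g p.2 x)
    (fun p x => mul_nonneg (hf0 p.1 x) (hg0 p.2 x))
    (fun p => ((hfm p.1).mul (hgm p.2)).aestronglyMeasurable)
    (fun x => (hF x).mul_of_nonneg (hG x) (hf0 · x) (hg0 · x)) hFGint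
  exact abs_div_sub_one_le_of_hasSum hFGsum
    (hFsum.mul_of_nonneg hGsum (fun i => (hfpos i).le) (fun j => (hgpos j).le))
    (fun p => mul_pos (hfpos p.1) (hgpos p.2)) (mul_pos hFpos hGpos) (fun p => hM p.1 p.2)

/-- Convexity lemma for ratio weak mixing: if every individual ratio
`ρ[f_i g_j]/(ρ[f_i]ρ[g_j])` is within `M` of `1`, then so is the ratio for the sums. -/
theorem stmt0 {Ω : Type*} [MeasurableSpace Ω] (ρ : Measure Ω) [IsProbabilityMeasure ρ]
    {I J : Type*} [Countable I] [Countable J]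
    (f : I → Ω → ℝ) (g : J → Ω → ℝ)
    (hf0 : ∀ i x, 0 ≤ f i x) (hg0 : ∀ j x, 0 ≤ g j x)
    (hfm : ∀ i, Measurable (f i)) (hgm : ∀ j, Measurable (g j))
    (hfpos : ∀ i, 0 < ∫ x, f i x ∂ρ) (hgpos : ∀ j, 0 < ∫ x, g j x ∂ρ)
    (F G : Ω → ℝ)
    (hF : ∀ x, HasSum (fun i => f i x) (F x)) (hG : ∀ x, HasSum (fun j => g j x) (G x))
    (hFint : Integrable F ρ) (hGint : Integrable G ρ)
    (hFGint : Integrable (fun x => F x * G x) ρ)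
    (hfg : ∀ i j, Integrable (fun x => f i x * g j x) ρ)
    (hFpos : 0 < ∫ x, F x ∂ρ) (hGpos : 0 < ∫ x, G x ∂ρ)
    (M : ℝ)
    (hM : ∀ i j,
      |(∫ x, f i x * g j x ∂ρ) / ((∫ x, f i x ∂ρ) * (∫ x, g j x ∂ρ)) - 1| ≤ M) :
    |(∫ x, F x * G x ∂ρ) / ((∫ x, F x ∂ρ) * (∫ x, G x ∂ρ)) - 1| ≤ M :=
  stmt0_general ρ f g hf0 hg0 hfm hgm hfpos hgpos F G hF hG hFint hGint hFGint hFpos hGpos M hM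
end

section
/- Let μ and ν be probability measures on {0,1}^E for a finite set E, and suppose μ strongly stochastically dominates ν, meaning: for every E' ⊆ E and every ξ ⪯ ξ' in {0,1}^{E'} with ν[ω|_{E'} = ξ] > 0 and μ[ω|_{E'} = ξ'] > 0, the conditional measure ν[·|ω|_{E'} = ξ] is stochastically dominated by μ[·|ω|_{E'} = ξ']. Then the exploration coupling (revealing edges one at a time in a fixed order, using shared i.i.d. uniform random variables (U_e)_{e∈E} and thresholding by the conditional probabilities) produces samples ω^ν ~ ν and ω^μ ~ μ with ω^ν ⪯ ω^μ almost surely. -/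
open scoped Classical
open MeasureTheory

/-- Conditional probability under `ν` that edge `j` is open given that the edges
`i < j` take the values prescribed by `ω`. -/
noncomputable def condProb {n : ℕ} (ν : (Fin n → Bool) → ℝ) (j : Fin n)
    (ω : Fin n → Bool) : ℝ :=
  (∑ b : Fin n → Bool,
      if (∀ i : Fin n, i < j → b i = ω i) ∧ b j = true then ν b else 0) /
  (∑ b : Fin n → Bool, if (∀ i : Fin n, i < j → b i = ω i) then ν b else 0)

/-- Partial exploration history of the exploration coupling. -/
noncomputable def hist {n : ℕ} (ν : (Fin n → Bool) → ℝ) (u : Fin n → ℝ) :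
    ℕ → (Fin n → Bool)
  | 0 => fun _ => false
  | (j + 1) => fun i =>
      if i.val = j then
        (if u i ≤ condProb ν i (hist ν u j) then true else false)
      else hist ν u j i

/-- The exploration sample associated to `ν` and the uniforms `u`. -/
noncomputable def explore {n : ℕ} (ν : (Fin n → Bool) → ℝ) (u : Fin n → ℝ) :
    Fin n → Bool := hist ν u n

/-- An event is increasing if it is upwards closed for the pointwise order. -/
def IncreasingEvent {n : ℕ} (U : Set (Fin n → Bool)) : Prop :=
  ∀ a b : Fin n → Bool, (∀ i, a i ≤ b i) → a ∈ U → b ∈ U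

/-- `μ` strongly stochastically dominates `ν`: conditioning `ν` on a smaller
restriction and `μ` on a larger one preserves stochastic domination. -/
def StrongDom {n : ℕ} (ν μ : (Fin n → Bool) → ℝ) : Prop :=
  ∀ E' : Finset (Fin n), ∀ ξ ξ' : Fin n → Bool, (∀ i ∈ E', ξ i ≤ ξ' i) →
    0 < (∑ b : Fin n → Bool, if (∀ i ∈ E', b i = ξ i) then ν b else 0) →
    0 < (∑ b : Fin n → Bool, if (∀ i ∈ E', b i = ξ' i) then μ b else 0) →
    ∀ U : Set (Fin n → Bool), IncreasingEvent U →
      (∑ b : Fin n → Bool, if b ∈ U ∧ (∀ i ∈ E', b i = ξ i) then ν b else 0) /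
          (∑ b : Fin n → Bool, if (∀ i ∈ E', b i = ξ i) then ν b else 0)
        ≤ (∑ b : Fin n → Bool, if b ∈ U ∧ (∀ i ∈ E', b i = ξ' i) then μ b else 0) /
          (∑ b : Fin n → Bool, if (∀ i ∈ E', b i = ξ' i) then μ b else 0)

/-!
Both samples are built by the same recursion, so it suffices to compare them one edge at a
time. Suppose the first `k` revealed values satisfy `ω^ν ⪯ ω^μ`. Strong domination, applied to
the prefix `{i < k}` and the increasing event `{ω_k = 1}`, says that the conditional probability
that edge `k` is open is at most as large under `ν` as under `μ`; thresholding the same uniform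
`U_k` by these two numbers keeps `ω^ν_k ≤ ω^μ_k`. The conditionings make sense because, for
`U_k ∈ (0, 1]`, the threshold rule never reveals a value of conditional probability zero, so the
revealed prefixes keep positive mass; and `U_k ∈ (0, 1]` holds almost surely.
-/

section Exploration

variable {n : ℕ}

noncomputable def prefixMass (ν : (Fin n → Bool) → ℝ) (k : ℕ) (ω : Fin n → Bool) : ℝ :=
  ∑ b : Fin n → Bool, if ∀ i : Fin n, (i : ℕ) < k → b i = ω i then ν b else 0

lemma prefixMass_zero (ν : (Fin n → Bool) → ℝ) (ω : Fin n → Bool) :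
    prefixMass ν 0 ω = ∑ b, ν b := by
  simp [prefixMass]

lemma prefixMass_succ_update (ν : (Fin n → Bool) → ℝ) (ω : Fin n → Bool) {k : ℕ}
    (hk : k < n) (c : Bool) :
    prefixMass ν (k + 1) (Function.update ω ⟨k, hk⟩ c) =
      ∑ b : Fin n → Bool, if (∀ i : Fin n, i < ⟨k, hk⟩ → b i = ω i) ∧ b ⟨k, hk⟩ = c
        then ν b else 0 := by
  refine Finset.sum_congr rfl fun b _ => if_congr ?_ rfl rfl
  constructor
  · intro h
    refine ⟨fun i hi => ?_, by simpa using h ⟨k, hk⟩ k.lt_succ_self⟩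
    rw [h i (Nat.lt_succ_of_lt hi), Function.update_of_ne (Fin.ne_of_lt hi)]
  · rintro ⟨h, rfl⟩ i hi
    rcases Nat.lt_succ_iff_lt_or_eq.mp hi with hi | hi
    · rw [h i hi, Function.update_of_ne (Fin.ne_of_lt hi)]
    · obtain rfl : i = ⟨k, hk⟩ := Fin.ext hi
      simp

lemma prefixMass_succ_update_true (ν : (Fin n → Bool) → ℝ) (ω : Fin n → Bool) {k : ℕ}
    (hk : k < n) (hD : prefixMass ν k ω ≠ 0) :
    prefixMass ν (k + 1) (Function.update ω ⟨k, hk⟩ true) =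
      condProb ν ⟨k, hk⟩ ω * prefixMass ν k ω := by
  rw [prefixMass_succ_update]
  exact (div_mul_cancel₀ _ hD).symm

lemma prefixMass_succ_update_false (ν : (Fin n → Bool) → ℝ) (ω : Fin n → Bool) {k : ℕ}
    (hk : k < n) (hD : prefixMass ν k ω ≠ 0) :
    prefixMass ν (k + 1) (Function.update ω ⟨k, hk⟩ false) =
      (1 - condProb ν ⟨k, hk⟩ ω) * prefixMass ν k ω := by
  have hsplit : prefixMass ν k ω =
      prefixMass ν (k + 1) (Function.update ω ⟨k, hk⟩ true) +
        prefixMass ν (k + 1) (Function.update ω ⟨k, hk⟩ false) := by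
    rw [prefixMass_succ_update, prefixMass_succ_update, ← Finset.sum_add_distrib]
    refine Finset.sum_congr rfl fun b _ => ?_
    cases b ⟨k, hk⟩ <;> simp [Fin.lt_def]
  rw [prefixMass_succ_update_true ν ω hk hD] at hsplit
  linarith

lemma hist_succ (ν : (Fin n → Bool) → ℝ) (u : Fin n → ℝ) {k : ℕ} (hk : k < n) :
    hist ν u (k + 1) = Function.update (hist ν u k) ⟨k, hk⟩
      (decide (u ⟨k, hk⟩ ≤ condProb ν ⟨k, hk⟩ (hist ν u k))) := by
  ext i
  by_cases hi : (i : ℕ) = k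
  · obtain rfl : i = ⟨k, hk⟩ := Fin.ext hi
    simp [hist]
  · simp [hist, hi, Function.update_of_ne (show i ≠ ⟨k, hk⟩ by rintro rfl; exact hi rfl)]

lemma prefixMass_hist_succ_pos (ν : (Fin n → Bool) → ℝ) (u : Fin n → ℝ) {k : ℕ} (hk : k < n)
    (hu : u ⟨k, hk⟩ ∈ Set.Ioc 0 1) (hD : 0 < prefixMass ν k (hist ν u k)) :
    0 < prefixMass ν (k + 1) (hist ν u (k + 1)) := by
  rw [hist_succ ν u hk]
  by_cases hopen : u ⟨k, hk⟩ ≤ condProb ν ⟨k, hk⟩ (hist ν u k)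
  · rw [decide_eq_true hopen, prefixMass_succ_update_true ν _ hk hD.ne']
    exact mul_pos (hu.1.trans_le hopen) hD
  · rw [decide_eq_false hopen, prefixMass_succ_update_false ν _ hk hD.ne']
    exact mul_pos (by linarith [hu.2, not_le.mp hopen]) hD

lemma prefixMass_hist_pos (ν : (Fin n → Bool) → ℝ) (hν : 0 < ∑ b, ν b) (u : Fin n → ℝ)
    (hu : ∀ j, u j ∈ Set.Ioc 0 1) : ∀ k ≤ n, 0 < prefixMass ν k (hist ν u k)
  | 0, _ => by rwa [prefixMass_zero]
  | k + 1, hk =>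
    prefixMass_hist_succ_pos ν u hk (hu _) (prefixMass_hist_pos ν hν u hu k (Nat.le_of_succ_le hk))

lemma increasingEvent_coord_eq_true (j : Fin n) :
    IncreasingEvent {b : Fin n → Bool | b j = true} :=
  fun _ _ hab ha => Bool.eq_true_of_true_le (ha ▸ hab j)

lemma StrongDom.condProb_le {ν μ : (Fin n → Bool) → ℝ} (hdom : StrongDom ν μ) (j : Fin n)
    {ω ω' : Fin n → Bool} (hle : ω ≤ ω') (hν : 0 < prefixMass ν j ω)
    (hμ : 0 < prefixMass μ j ω') :
    condProb ν j ω ≤ condProb μ j ω' := by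
  have key :=
    hdom (Finset.Iio j) ω ω' (fun i _ => hle i) ?_ ?_ _ (increasingEvent_coord_eq_true j)
  · unfold condProb
    simpa only [Finset.mem_Iio, Set.mem_ofPred_eq, and_comm] using key
  · simp only [Finset.mem_Iio]; exact hν
  · simp only [Finset.mem_Iio]; exact hμ

lemma StrongDom.hist_le {ν μ : (Fin n → Bool) → ℝ} (hdom : StrongDom ν μ)
    (hν : 0 < ∑ b, ν b) (hμ : 0 < ∑ b, μ b) (u : Fin n → ℝ) (hu : ∀ j, u j ∈ Set.Ioc 0 1) :
    ∀ k ≤ n, hist ν u k ≤ hist μ u k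
  | 0, _ => le_rfl
  | k + 1, hk => by
    have hk' : k ≤ n := Nat.le_of_succ_le hk
    have hle := hdom.hist_le hν hμ u hu k hk'
    have hp := hdom.condProb_le ⟨k, hk⟩ hle (prefixMass_hist_pos ν hν u hu k hk')
      (prefixMass_hist_pos μ hμ u hu k hk')
    rw [hist_succ ν u hk, hist_succ μ u hk, update_le_update_iff]
    exact ⟨Bool.le_iff_imp.mpr fun h => decide_eq_true ((of_decide_eq_true h).trans hp),
      fun i _ => hle i⟩

end Exploration

lemma ae_pi_restrict_Icc_mem_Ioc {ι : Type*} [Fintype ι] (a b : ℝ) :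
    ∀ᵐ u ∂(Measure.pi fun _ : ι => volume.restrict (Set.Icc a b)), ∀ j, u j ∈ Set.Ioc a b := by
  refine ae_all_iff.mpr fun j => Measure.tendsto_eval_ae_ae.eventually ?_
  rw [← Measure.restrict_congr_set Ioc_ae_eq_Icc]
  exact ae_restrict_mem measurableSet_Ioc

theorem stmt11_general {n : ℕ} (ν μ : (Fin n → Bool) → ℝ)
    (hν1 : ∑ b, ν b = 1)
    (hμ1 : ∑ b, μ b = 1)
    (hdom : StrongDom ν μ) :
    ∀ᵐ u ∂(Measure.pi fun _ : Fin n => volume.restrict (Set.Icc (0 : ℝ) 1)),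
      ∀ i : Fin n, explore ν u i ≤ explore μ u i := by
  filter_upwards [ae_pi_restrict_Icc_mem_Ioc 0 1] with u hu
  exact hdom.hist_le (hν1 ▸ one_pos) (hμ1 ▸ one_pos) u hu n le_rfl

/-- If `μ` strongly stochastically dominates `ν`, the exploration coupling (with
shared uniforms) produces `ω^ν ⪯ ω^μ` almost surely. -/
theorem stmt11 {n : ℕ} (ν μ : (Fin n → Bool) → ℝ)
    (hν0 : ∀ b, 0 ≤ ν b) (hν1 : ∑ b, ν b = 1)
    (hμ0 : ∀ b, 0 ≤ μ b) (hμ1 : ∑ b, μ b = 1)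
    (hdom : StrongDom ν μ) :
    ∀ᵐ u ∂(Measure.pi fun _ : Fin n => volume.restrict (Set.Icc (0 : ℝ) 1)),
      ∀ i : Fin n, explore ν u i ≤ explore μ u i :=
  stmt11_general ν μ hν1 hμ1 hdom
end

section
/- Let T be the rooted tree with n generations where every node has d ≥ 2 children, and let ν be a site percolation measure on T. Suppose (i) for each vertex v, ν[v closed] ≤ α·exp(−C·λ^{n−gen(v)}) for some constants C > 0, λ > 1, α > 0, and (ii) for any two vertex sets W, W' with no common descendants, the restrictions of the configuration to W and W' are ν-independent. Let A be a subset of the n-th generation and let 𝔠^A_n be the number of root-to-A paths containing at least one closed vertex. Then ν[|𝔠^A_n|] ≤ α·C'·|A| and Var_ν[|𝔠^A_n|] ≤ α·C'·|A|, where C' depends only on C, λ, d, and hence by Chebyshev, ν[|C_o ∩ A| ≤ (1 − αC' − |A|^{−1/3})|A|] ≤ αC'·|A|^{−1/3}, where C_o is the open cluster of the root. -/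
open scoped Classical
open MeasureTheory

/-- Vertices of the complete rooted `d`-ary tree of depth `n`: a vertex in
generation `j ≤ n` is a word of length `j` over the alphabet `Fin d`. -/
def Vtx (n d : ℕ) := Σ j : Fin (n + 1), (Fin j.val → Fin d)

/-- The generation-`j` vertex on the root-to-leaf path of the leaf `a`. -/
def leafVtx {n d : ℕ} (a : Fin n → Fin d) (j : Fin (n + 1)) : Vtx n d :=
  ⟨j, fun i => a ⟨i.val, lt_of_lt_of_le i.isLt (Nat.lt_succ_iff.mp j.isLt)⟩⟩

/-- The whole root-to-leaf path of `a` is open under `σ`. -/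
def pathOpen {n d : ℕ} (σ : Vtx n d → Bool) (a : Fin n → Fin d) : Prop :=
  ∀ j : Fin (n + 1), σ (leafVtx a j) = true

/-- `w` is a descendant of `v` (i.e. `v` is a prefix of `w`). -/
def isDesc {n d : ℕ} (v w : Vtx n d) : Prop :=
  ∃ h : v.1.val ≤ w.1.val, ∀ i : Fin v.1.val,
    v.2 i = w.2 ⟨i.val, lt_of_lt_of_le i.isLt h⟩

/-- `W` and `W'` have no common descendants. -/
def noCommonDesc {n d : ℕ} (W W' : Set (Vtx n d)) : Prop :=
  ¬ ∃ u : Vtx n d, (∃ v ∈ W, isDesc v u) ∧ (∃ v' ∈ W', isDesc v' u)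

/-- The event `A` depends only on the sites in `W`. -/
def dependsOnV {n d : ℕ} (W : Set (Vtx n d)) (A : Set (Vtx n d → Bool)) : Prop :=
  ∀ σ τ : Vtx n d → Bool, (∀ v ∈ W, σ v = τ v) → (σ ∈ A ↔ τ ∈ A)

/-- Number of leaves of `A` whose root-to-leaf path contains a closed vertex. -/
noncomputable def closedCnt {n d : ℕ} (A : Finset (Fin n → Fin d))
    (σ : Vtx n d → Bool) : ℕ := (A.filter fun a => ¬ pathOpen σ a).card

/-- Number of leaves of `A` in the open cluster of the root. -/
noncomputable def rootCnt {n d : ℕ} (A : Finset (Fin n → Fin d))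
    (σ : Vtx n d → Bool) : ℕ := (A.filter fun a => pathOpen σ a).card

instance {n d : ℕ} : Fintype (Vtx n d) := by unfold Vtx; infer_instance

lemma sumT (d : ℕ) (C lam : ℝ) (hC : 0 < C) (hlam : 1 < lam) :
    ∃ T : ℝ, 0 < T ∧ ∀ n : ℕ,
      ∑ k ∈ Finset.range (n + 1), (d : ℝ) ^ k * Real.exp (-C * lam ^ k) ≤ T := by
  set f : ℕ → ℝ := fun k => (d : ℝ) ^ k * Real.exp (-C * lam ^ k) with hf
  have hfpos : ∀ k, 0 ≤ f k := fun k => by positivity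
  have hsum : Summable f := by
    apply summable_of_ratio_norm_eventually_le (r := 1/2) (by norm_num)
    have h1 : Filter.Tendsto (fun k : ℕ => C * (lam - 1) * lam ^ k) Filter.atTop Filter.atTop := by
      apply Filter.Tendsto.const_mul_atTop (by nlinarith)
      exact tendsto_pow_atTop_atTop_of_one_lt hlam
    have h2 : Filter.Tendsto (fun k : ℕ => Real.exp (-(C * (lam - 1) * lam ^ k)))
        Filter.atTop (nhds 0) := Real.tendsto_exp_atBot.comp (Filter.tendsto_neg_atBot_iff.mpr h1)
    have h3 : ∀ᶠ k in Filter.atTop,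
        Real.exp (-(C * (lam - 1) * lam ^ k)) ≤ 1 / (2 * ((d:ℝ) + 1)) := by
      have := h2.eventually_le_const (show (0:ℝ) < 1 / (2 * ((d:ℝ)+1)) by positivity)
      exact this
    filter_upwards [h3] with k hk
    have hd0 : (0:ℝ) ≤ (d:ℝ) := by positivity
    rw [Real.norm_of_nonneg (hfpos _), Real.norm_of_nonneg (hfpos _)]
    have key : f (k+1) = f k * ((d:ℝ) * Real.exp (-(C * (lam - 1) * lam ^ k))) := by
      simp only [hf, pow_succ]
      rw [mul_mul_mul_comm, ← Real.exp_add]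
      ring_nf
    rw [key]
    have h4 : (d:ℝ) * Real.exp (-(C * (lam - 1) * lam ^ k)) ≤ 1/2 := by
      calc (d:ℝ) * Real.exp (-(C * (lam - 1) * lam ^ k))
          ≤ ((d:ℝ)+1) * (1 / (2 * ((d:ℝ)+1))) := by
            apply mul_le_mul (by linarith) hk (Real.exp_pos _).le (by positivity)
        _ = 1/2 := by field_simp
    calc f k * ((d:ℝ) * Real.exp (-(C * (lam - 1) * lam ^ k)))
        ≤ f k * (1/2) := by apply mul_le_mul_of_nonneg_left h4 (hfpos k)
      _ = 1/2 * f k := by ring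
  refine ⟨∑' k, f k, ?_, fun n => ?_⟩
  · have h0 : 0 < f 0 := by simp [hf]; positivity
    exact lt_of_lt_of_le h0 (Summable.le_tsum hsum 0 fun i _ => hfpos i)
  · exact Summable.sum_le_tsum _ (fun i _ => hfpos i) hsum

lemma measAll {n d : ℕ} (s : Set (Vtx n d → Bool)) : MeasurableSet s :=
  s.to_countable.measurableSet

lemma unionBound {n d : ℕ} (ν : Measure (Vtx n d → Bool)) [IsProbabilityMeasure ν]
    {ι : Type*} (s : Finset ι) (E : ι → Set (Vtx n d → Bool)) :
    (ν (⋃ j ∈ s, E j)).toReal ≤ ∑ j ∈ s, (ν (E j)).toReal := by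
  have h1 : ν (⋃ j ∈ s, E j) ≤ ∑ j ∈ s, ν (E j) := measure_biUnion_finset_le s E
  have h2 : ∑ j ∈ s, ν (E j) ≠ ⊤ :=
    (ENNReal.sum_lt_top.mpr (fun j _ => measure_lt_top ν _)).ne
  calc (ν (⋃ j ∈ s, E j)).toReal ≤ (∑ j ∈ s, ν (E j)).toReal := ENNReal.toReal_mono h2 h1
    _ = ∑ j ∈ s, (ν (E j)).toReal := ENNReal.toReal_sum (fun j _ => (measure_lt_top ν _).ne)


lemma leafVtx_agree {n d : ℕ} (a b : Fin n → Fin d) (j : Fin (n+1))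
    (h : ∀ i : Fin n, i.val < j.val → a i = b i) : leafVtx a j = leafVtx b j := by
  unfold leafVtx
  exact congrArg (Sigma.mk j) (funext fun i => h _ i.isLt)


lemma covBound {n d : ℕ} (C lam α : ℝ)
    (ν : Measure (Vtx n d → Bool)) [hν : IsProbabilityMeasure ν]
    (hclosed : ∀ v : Vtx n d,
      (ν {σ | σ v = false}).toReal ≤ α * Real.exp (-C * lam ^ (n - v.1.val)))
    (hind : ∀ W W' : Set (Vtx n d), noCommonDesc W W' →
        ∀ A B : Set (Vtx n d → Bool), MeasurableSet A → MeasurableSet B →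
          dependsOnV W A → dependsOnV W' B → ν (A ∩ B) = ν A * ν B)
    (a b : Fin n → Fin d) (m : ℕ) (hmn : m < n)
    (hne : a ⟨m, hmn⟩ ≠ b ⟨m, hmn⟩)
    (hagree : ∀ i : Fin n, i.val < m → a i = b i) :
    (ν ({σ | ¬ pathOpen σ a} ∩ {σ | ¬ pathOpen σ b})).toReal
      - (ν {σ | ¬ pathOpen σ a}).toReal * (ν {σ | ¬ pathOpen σ b}).toReal
    ≤ 2 * (α * ∑ k ∈ Finset.range (m+1), Real.exp (-C * lam ^ (n - k))) := by
  have hfin : ∀ s : Set (Vtx n d → Bool), ν s ≠ ⊤ := fun s => (measure_lt_top ν s).ne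
  have hcompl : ∀ s : Set (Vtx n d → Bool), (ν sᶜ).toReal = 1 - (ν s).toReal := by
    intro s
    rw [measure_compl (measAll s) (hfin s), measure_univ,
      ENNReal.toReal_sub_of_le prob_le_one ENNReal.one_ne_top, ENNReal.toReal_one]
  have hone : ∀ s : Set (Vtx n d → Bool), (ν s).toReal ≤ 1 := by
    intro s
    calc (ν s).toReal ≤ (ν Set.univ).toReal :=
        ENNReal.toReal_mono (hfin _) (measure_mono (Set.subset_univ _))
      _ = 1 := by simp
  set Sh : Set (Vtx n d → Bool) :=
    {σ | ∀ j : Fin (n+1), j.val ≤ m → σ (leafVtx a j) = true} with hSh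
  set B : Set (Vtx n d → Bool) :=
    {σ | ∀ j : Fin (n+1), m < j.val → σ (leafVtx a j) = true} with hB
  set B' : Set (Vtx n d → Bool) :=
    {σ | ∀ j : Fin (n+1), m < j.val → σ (leafVtx b j) = true} with hB'
  -- structure facts
  have hOsplit : {σ : Vtx n d → Bool | pathOpen σ a} = Sh ∩ B := by
    ext σ
    constructor
    · intro h; exact ⟨fun j _ => h j, fun j _ => h j⟩
    · rintro ⟨h1, h2⟩ j
      rcases le_or_gt j.val m with h | h
      · exact h1 j h
      · exact h2 j h
  have hO'split : {σ : Vtx n d → Bool | pathOpen σ b} = Sh ∩ B' := by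
    ext σ
    have hlv : ∀ j : Fin (n+1), j.val ≤ m → leafVtx a j = leafVtx b j := by
      intro j hj
      exact leafVtx_agree a b j (fun i hi => hagree i (lt_of_lt_of_le hi hj))
    constructor
    · intro h
      refine ⟨fun j hj => ?_, fun j _ => h j⟩
      rw [hlv j hj]; exact h j
    · rintro ⟨h1, h2⟩ j
      rcases le_or_gt j.val m with h | h
      · rw [← hlv j h]; exact h1 j h
      · exact h2 j h
  have hno_a : {σ : Vtx n d → Bool | ¬ pathOpen σ a} = (Sh ∩ B)ᶜ := by
    rw [← hOsplit]; rfl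
  have hno_b : {σ : Vtx n d → Bool | ¬ pathOpen σ b} = (Sh ∩ B')ᶜ := by
    rw [← hO'split]; rfl
  -- independence of the tails
  have hBB' : ν (B ∩ B') = ν B * ν B' := by
    apply hind {v : Vtx n d | ∃ j : Fin (n+1), m < j.val ∧ v = leafVtx a j}
      {v : Vtx n d | ∃ j : Fin (n+1), m < j.val ∧ v = leafVtx b j}
    · rintro ⟨u, ⟨v, ⟨j, hj, rfl⟩, hle, hpre⟩, ⟨v', ⟨j', hj', rfl⟩, hle', hpre'⟩⟩
      have h1 := hpre ⟨m, hj⟩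
      have h2 := hpre' ⟨m, hj'⟩
      simp only [leafVtx] at h1 h2 hle hle'
      have hmu : m < u.1.val := lt_of_lt_of_le hj hle
      apply hne
      have e1 : a ⟨m, hmn⟩ = u.2 ⟨m, hmu⟩ := h1
      have e2 : b ⟨m, hmn⟩ = u.2 ⟨m, hmu⟩ := h2
      rw [e1, e2]
    · exact measAll _
    · exact measAll _
    · intro σ τ hστ
      constructor <;> intro h j hj
      · rw [← hστ (leafVtx a j) ⟨j, hj, rfl⟩]; exact h j hj
      · rw [hστ (leafVtx a j) ⟨j, hj, rfl⟩]; exact h j hj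
    · intro σ τ hστ
      constructor <;> intro h j hj
      · rw [← hστ (leafVtx b j) ⟨j, hj, rfl⟩]; exact h j hj
      · rw [hστ (leafVtx b j) ⟨j, hj, rfl⟩]; exact h j hj
  -- inclusion-exclusion
  have hu : (ν (Sh ∩ B ∪ Sh ∩ B')).toReal
      = (ν (Sh ∩ B)).toReal + (ν (Sh ∩ B')).toReal - (ν (Sh ∩ B ∩ (Sh ∩ B'))).toReal := by
    have h1 := measure_union_add_inter (μ := ν) (Sh ∩ B) (measAll (Sh ∩ B'))
    have h2 : (ν (Sh ∩ B ∪ Sh ∩ B')).toReal + (ν (Sh ∩ B ∩ (Sh ∩ B'))).toReal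
        = (ν (Sh ∩ B)).toReal + (ν (Sh ∩ B')).toReal := by
      rw [← ENNReal.toReal_add (hfin _) (hfin _), h1,
        ENNReal.toReal_add (hfin _) (hfin _)]
    linarith
  have hz : (ν ((Sh ∩ B)ᶜ ∩ (Sh ∩ B')ᶜ)).toReal
      = 1 - ((ν (Sh ∩ B)).toReal + (ν (Sh ∩ B')).toReal
            - (ν (Sh ∩ B ∩ (Sh ∩ B'))).toReal) := by
    rw [← Set.compl_union, hcompl, hu]
  -- inequalities
  have hi_le : (ν (Sh ∩ B ∩ (Sh ∩ B'))).toReal ≤ (ν B).toReal * (ν B').toReal := by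
    have hsub : Sh ∩ B ∩ (Sh ∩ B') ⊆ B ∩ B' :=
      Set.inter_subset_inter Set.inter_subset_right Set.inter_subset_right
    calc (ν (Sh ∩ B ∩ (Sh ∩ B'))).toReal ≤ (ν (B ∩ B')).toReal :=
        ENNReal.toReal_mono (hfin _) (measure_mono hsub)
      _ = (ν B).toReal * (ν B').toReal := by rw [hBB', ENNReal.toReal_mul]
  have hbx : (ν B).toReal ≤ (ν (Sh ∩ B)).toReal + (ν Shᶜ).toReal := by
    have hsub : B ⊆ (Sh ∩ B) ∪ Shᶜ := by
      intro σ hσ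
      by_cases h : σ ∈ Sh
      · exact Or.inl ⟨h, hσ⟩
      · exact Or.inr h
    calc (ν B).toReal ≤ (ν ((Sh ∩ B) ∪ Shᶜ)).toReal :=
        ENNReal.toReal_mono (hfin _) (measure_mono hsub)
      _ ≤ (ν (Sh ∩ B) + ν Shᶜ).toReal := ENNReal.toReal_mono
          (ENNReal.add_ne_top.mpr ⟨hfin _, hfin _⟩) (measure_union_le _ _)
      _ = (ν (Sh ∩ B)).toReal + (ν Shᶜ).toReal := ENNReal.toReal_add (hfin _) (hfin _)
  have hgy : (ν B').toReal ≤ (ν (Sh ∩ B')).toReal + (ν Shᶜ).toReal := by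
    have hsub : B' ⊆ (Sh ∩ B') ∪ Shᶜ := by
      intro σ hσ
      by_cases h : σ ∈ Sh
      · exact Or.inl ⟨h, hσ⟩
      · exact Or.inr h
    calc (ν B').toReal ≤ (ν ((Sh ∩ B') ∪ Shᶜ)).toReal :=
        ENNReal.toReal_mono (hfin _) (measure_mono hsub)
      _ ≤ (ν (Sh ∩ B') + ν Shᶜ).toReal := ENNReal.toReal_mono
          (ENNReal.add_ne_top.mpr ⟨hfin _, hfin _⟩) (measure_union_le _ _)
      _ = (ν (Sh ∩ B')).toReal + (ν Shᶜ).toReal := ENNReal.toReal_add (hfin _) (hfin _)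
  have hxb : (ν (Sh ∩ B)).toReal ≤ (ν B).toReal :=
    ENNReal.toReal_mono (hfin _) (measure_mono Set.inter_subset_right)
  have hyg : (ν (Sh ∩ B')).toReal ≤ (ν B').toReal :=
    ENNReal.toReal_mono (hfin _) (measure_mono Set.inter_subset_right)
  -- the bound on t
  have ht : (ν Shᶜ).toReal
      ≤ α * ∑ k ∈ Finset.range (m+1), Real.exp (-C * lam ^ (n - k)) := by
    have hShc : Shᶜ = ⋃ j ∈ (Finset.univ.filter (fun j : Fin (n+1) => j.val ≤ m)),
        {σ : Vtx n d → Bool | σ (leafVtx a j) = false} := by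
      ext σ
      simp only [hSh, Set.mem_compl_iff, Set.mem_setOf_eq, Set.mem_iUnion,
        Finset.mem_filter, Finset.mem_univ, true_and]
      constructor
      · intro h
        push_neg at h
        obtain ⟨j, hj, hfalse⟩ := h
        exact ⟨j, hj, by simpa using hfalse⟩
      · rintro ⟨j, hj, hfalse⟩ h
        rw [h j hj] at hfalse
        simp at hfalse
    rw [hShc]
    calc (ν _).toReal ≤ ∑ j ∈ (Finset.univ.filter (fun j : Fin (n+1) => j.val ≤ m)),
          (ν {σ : Vtx n d → Bool | σ (leafVtx a j) = false}).toReal := unionBound ν _ _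
      _ ≤ ∑ j ∈ (Finset.univ.filter (fun j : Fin (n+1) => j.val ≤ m)),
          α * Real.exp (-C * lam ^ (n - j.val)) := by
          apply Finset.sum_le_sum
          intro j _
          exact hclosed (leafVtx a j)
      _ = ∑ j : Fin (n+1), (if j.val ≤ m then α * Real.exp (-C * lam ^ (n - j.val)) else 0) :=
          (Finset.sum_filter _ _)
      _ = ∑ k ∈ Finset.range (n+1), (if k ≤ m then α * Real.exp (-C * lam ^ (n - k)) else 0) :=
          Fin.sum_univ_eq_sum_range
            (fun k => if k ≤ m then α * Real.exp (-C * lam ^ (n - k)) else 0) (n+1)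
      _ = ∑ k ∈ Finset.range (m+1), α * Real.exp (-C * lam ^ (n - k)) := by
          rw [← Finset.sum_filter]
          congr 1
          ext k
          simp only [Finset.mem_filter, Finset.mem_range]
          omega
      _ = α * ∑ k ∈ Finset.range (m+1), Real.exp (-C * lam ^ (n - k)) := by
          rw [Finset.mul_sum]
  -- conclude
  rw [hno_a, hno_b, hz, hcompl, hcompl]
  set x := (ν (Sh ∩ B)).toReal with hxdef
  set y := (ν (Sh ∩ B')).toReal with hydef
  set i := (ν (Sh ∩ B ∩ (Sh ∩ B'))).toReal with hidef
  set br := (ν B).toReal with hbrdef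
  set gr := (ν B').toReal with hgrdef
  set t := (ν Shᶜ).toReal with htdef
  have hx0 : 0 ≤ x := ENNReal.toReal_nonneg
  have hy0 : 0 ≤ y := ENNReal.toReal_nonneg
  have ht0 : 0 ≤ t := ENNReal.toReal_nonneg
  have hx1 : x ≤ 1 := hone _
  have hg1 : gr ≤ 1 := hone _
  have hgr0 : 0 ≤ gr := ENNReal.toReal_nonneg
  have key : 1 - (x + y - i) - (1 - x) * (1 - y) = i - x * y := by ring
  rw [key]
  nlinarith [mul_nonneg ht0 (sub_nonneg.mpr hyg), mul_le_mul_of_nonneg_left hgy hx0,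
    mul_le_mul_of_nonneg_right hbx hy0,
    mul_nonneg (sub_nonneg.mpr hxb) hgr0]

lemma countAgree {n d : ℕ} (a : Fin n → Fin d) (k : ℕ) (hk : k ≤ n) :
    ((Finset.univ.filter
        (fun b : Fin n → Fin d => ∀ i : Fin n, i.val < k → b i = a i)).card : ℝ)
      ≤ (d : ℝ) ^ (n - k) := by
  have h : (Finset.univ.filter
        (fun b : Fin n → Fin d => ∀ i : Fin n, i.val < k → b i = a i)).card
      ≤ d ^ (n - k) := by
    have := Finset.card_le_card_of_injOn
      (s := Finset.univ.filter
        (fun b : Fin n → Fin d => ∀ i : Fin n, i.val < k → b i = a i))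
      (f := fun b : Fin n → Fin d => fun i : Fin (n - k) => b ⟨k + i.val, by omega⟩)
      (t := (Finset.univ : Finset (Fin (n - k) → Fin d)))
      (fun b _ => Finset.mem_univ _) ?_
    · calc _ ≤ (Finset.univ : Finset (Fin (n - k) → Fin d)).card := this
        _ = d ^ (n - k) := by simp [Finset.card_univ]
    · intro b hb b' hb' heq
      simp only [Finset.coe_filter, Set.mem_setOf_eq, Finset.mem_univ, true_and] at hb hb'
      funext i
      rcases lt_or_ge i.val k with h | h
      · rw [hb i h, hb' i h]
      · have heq2 := congrFun heq ⟨i.val - k, by omega⟩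
        simp only at heq2
        have hidx : (⟨k + (i.val - k), by omega⟩ : Fin n) = i := by
          ext; simp; omega
        rwa [hidx] at heq2
  calc ((Finset.univ.filter _).card : ℝ) ≤ ((d ^ (n - k) : ℕ) : ℝ) := by exact_mod_cast h
    _ = (d : ℝ) ^ (n - k) := by push_cast; ring

lemma intInd {n d : ℕ} (ν : Measure (Vtx n d → Bool)) [IsProbabilityMeasure ν]
    (S : Set (Vtx n d → Bool)) {D : ∀ σ, Decidable (σ ∈ S)} :
    ∫ σ, (if σ ∈ S then (1:ℝ) else 0) ∂ν = (ν S).toReal := by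
  have : (fun σ => if σ ∈ S then (1:ℝ) else 0) = S.indicator (fun _ => (1:ℝ)) := by
    funext σ
    by_cases h : σ ∈ S
    · rw [if_pos h, Set.indicator_of_mem h]
    · rw [if_neg h, Set.indicator_of_notMem h]
  rw [this]
  show ∫ σ, S.indicator (fun _ => (1:ℝ)) σ ∂ν = (ν S).toReal
  exact MeasureTheory.integral_indicator_one (measAll S)


lemma meanFormula {n d : ℕ} (ν : Measure (Vtx n d → Bool)) [IsProbabilityMeasure ν]
    (A : Finset (Fin n → Fin d)) :
    (∫ σ, (closedCnt A σ : ℝ) ∂ν) = ∑ a ∈ A, (ν {σ | ¬ pathOpen σ a}).toReal := by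
  have hcnt : (fun σ : Vtx n d → Bool => (closedCnt A σ : ℝ))
      = fun σ => ∑ a ∈ A, (if σ ∈ {σ' : Vtx n d → Bool | ¬ pathOpen σ' a} then (1:ℝ) else 0) := by
    funext σ
    unfold closedCnt
    rw [Finset.card_filter]
    push_cast
    rfl
  rw [hcnt, integral_finset_sum A (fun a _ => Integrable.of_finite)]
  exact Finset.sum_congr rfl (fun a _ => intInd ν _)


lemma varFormula {n d : ℕ} (ν : Measure (Vtx n d → Bool)) [IsProbabilityMeasure ν]
    (A : Finset (Fin n → Fin d)) :
    (∫ σ, ((closedCnt A σ : ℝ) - ∫ σ', (closedCnt A σ' : ℝ) ∂ν) ^ 2 ∂ν)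
      = ∑ a ∈ A, ∑ b ∈ A,
        ((ν ({σ | ¬ pathOpen σ a} ∩ {σ | ¬ pathOpen σ b})).toReal
          - (ν {σ | ¬ pathOpen σ a}).toReal * (ν {σ | ¬ pathOpen σ b}).toReal) := by
  set X : (Fin n → Fin d) → (Vtx n d → Bool) → ℝ :=
    fun a σ => if σ ∈ {σ' : Vtx n d → Bool | ¬ pathOpen σ' a} then (1:ℝ) else 0 with hX
  set p : (Fin n → Fin d) → ℝ := fun a => (ν {σ | ¬ pathOpen σ a}).toReal with hp
  have hXint : ∀ a, ∫ σ, X a σ ∂ν = p a := fun a => intInd ν _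
  have hcnt : ∀ σ, (closedCnt A σ : ℝ) = ∑ a ∈ A, X a σ := by
    intro σ
    unfold closedCnt
    rw [Finset.card_filter]
    push_cast
    rfl
  have hM : (∫ σ', (closedCnt A σ' : ℝ) ∂ν) = ∑ a ∈ A, p a := by
    have : (fun σ : Vtx n d → Bool => (closedCnt A σ : ℝ)) = fun σ => ∑ a ∈ A, X a σ :=
      funext hcnt
    rw [this, integral_finset_sum A (fun a _ => Integrable.of_finite)]
    exact Finset.sum_congr rfl (fun a _ => hXint a)
  have hintegrand : (fun σ => ((closedCnt A σ : ℝ) - ∫ σ', (closedCnt A σ' : ℝ) ∂ν) ^ 2)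
      = fun σ => ∑ a ∈ A, ∑ b ∈ A, (X a σ - p a) * (X b σ - p b) := by
    funext σ
    rw [hcnt σ, hM, sq, ← Finset.sum_sub_distrib, Finset.sum_mul_sum]
  rw [hintegrand, integral_finset_sum A (fun a _ => Integrable.of_finite)]
  apply Finset.sum_congr rfl
  intro a _
  rw [integral_finset_sum A (fun b _ => Integrable.of_finite)]
  apply Finset.sum_congr rfl
  intro b _
  have hprod : (fun σ => (X a σ - p a) * (X b σ - p b))
      = fun σ => ((if σ ∈ ({σ' | ¬ pathOpen σ' a} ∩ {σ' | ¬ pathOpen σ' b} :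
            Set (Vtx n d → Bool)) then (1:ℝ) else 0)
          - p a * X b σ - p b * X a σ) + p a * p b := by
    funext σ
    simp only [hX, Set.mem_inter_iff, Set.mem_setOf_eq]
    by_cases h1 : ¬ pathOpen σ a <;> by_cases h2 : ¬ pathOpen σ b <;>
      simp [h1, h2] <;> ring
  rw [hprod]
  have e1 := integral_add (μ := ν)
    (f := fun σ => (if σ ∈ ({σ' | ¬ pathOpen σ' a} ∩ {σ' | ¬ pathOpen σ' b} :
        Set (Vtx n d → Bool)) then (1:ℝ) else 0) - p a * X b σ - p b * X a σ)
    (g := fun _ => p a * p b)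
    (((Integrable.of_finite).sub Integrable.of_finite).sub Integrable.of_finite)
    (integrable_const _)
  have e2 := integral_sub (μ := ν)
    (f := fun σ => (if σ ∈ ({σ' | ¬ pathOpen σ' a} ∩ {σ' | ¬ pathOpen σ' b} :
        Set (Vtx n d → Bool)) then (1:ℝ) else 0) - p a * X b σ)
    (g := fun σ => p b * X a σ)
    ((Integrable.of_finite).sub Integrable.of_finite) Integrable.of_finite
  have e3 := integral_sub (μ := ν)
    (f := fun σ => (if σ ∈ ({σ' | ¬ pathOpen σ' a} ∩ {σ' | ¬ pathOpen σ' b} :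
        Set (Vtx n d → Bool)) then (1:ℝ) else 0))
    (g := fun σ => p a * X b σ)
    Integrable.of_finite Integrable.of_finite
  rw [e1, e2, e3, intInd ν _, integral_const_mul, integral_const_mul, hXint a, hXint b,
    integral_const]
  simp only [measure_univ, probReal_univ, ENNReal.toReal_one, smul_eq_mul, one_mul]
  ring

/-- The tree second-moment lemma: on the complete rooted `d`-ary tree of depth `n`,
under a site-percolation measure whose closure probabilities decay doubly
exponentially in the co-generation and which is independent over sets without
common descendants, the number of root-to-`A` paths with a closed vertex has mean
and variance at most `αC'|A|`, and by Chebyshev the root cluster touches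
`(1 - αC' - |A|^{-1/3})|A|` points of `A` except with probability `αC'|A|^{-1/3}`. -/
theorem stmt13 (d : ℕ) (hd : 2 ≤ d) (C lam : ℝ) (hC : 0 < C) (hlam : 1 < lam) :
    ∃ C' : ℝ, 0 < C' ∧
      ∀ (n : ℕ) (α : ℝ), 0 < α →
      ∀ (ν : Measure (Vtx n d → Bool)), IsProbabilityMeasure ν →
      (∀ v : Vtx n d,
        (ν {σ | σ v = false}).toReal ≤ α * Real.exp (-C * lam ^ (n - v.1.val))) →
      (∀ W W' : Set (Vtx n d), noCommonDesc W W' →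
        ∀ A B : Set (Vtx n d → Bool), MeasurableSet A → MeasurableSet B →
          dependsOnV W A → dependsOnV W' B → ν (A ∩ B) = ν A * ν B) →
      ∀ A : Finset (Fin n → Fin d), A.Nonempty →
        (∫ σ, (closedCnt A σ : ℝ) ∂ν) ≤ α * C' * A.card ∧
        (∫ σ, ((closedCnt A σ : ℝ) - ∫ σ', (closedCnt A σ' : ℝ) ∂ν) ^ 2 ∂ν)
            ≤ α * C' * A.card ∧
        ν {σ | (rootCnt A σ : ℝ)
              ≤ (1 - α * C' - (A.card : ℝ) ^ (-(1/3 : ℝ))) * A.card}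
          ≤ ENNReal.ofReal (α * C' * (A.card : ℝ) ^ (-(1/3 : ℝ))) := by
  obtain ⟨T, hT, hTsum⟩ := sumT d C lam hC hlam
  refine ⟨3 * T + 1, by linarith, ?_⟩
  intro n α hα ν hprob hclosed hind A hAne
  have hfin : ∀ s : Set (Vtx n d → Bool), ν s ≠ ⊤ := fun s => (measure_lt_top ν s).ne
  have hd1 : (1:ℝ) ≤ (d:ℝ) := by exact_mod_cast Nat.one_le_of_lt hd
  -- basic exponential sums
  have hone_le_pow : ∀ k : ℕ, (1:ℝ) ≤ (d:ℝ) ^ k := fun k => by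
    calc (1:ℝ) = 1 ^ k := (one_pow k).symm
      _ ≤ (d:ℝ) ^ k := pow_le_pow_left₀ zero_le_one hd1 k
  have hrefl : ∑ k ∈ Finset.range (n+1), Real.exp (-C * lam ^ (n - k)) ≤ T := by
    have h1 : ∑ k ∈ Finset.range (n+1), Real.exp (-C * lam ^ (n - k))
        = ∑ k ∈ Finset.range (n+1), Real.exp (-C * lam ^ k) := by
      have := Finset.sum_range_reflect (fun k => Real.exp (-C * lam ^ k)) (n+1)
      simpa using this
    rw [h1]
    calc ∑ k ∈ Finset.range (n+1), Real.exp (-C * lam ^ k)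
        ≤ ∑ k ∈ Finset.range (n+1), (d:ℝ) ^ k * Real.exp (-C * lam ^ k) := by
          apply Finset.sum_le_sum
          intro k _
          exact le_mul_of_one_le_left (Real.exp_pos _).le (hone_le_pow k)
      _ ≤ T := hTsum n
  have hreflw : ∑ k ∈ Finset.range (n+1), (d:ℝ) ^ (n-k) * Real.exp (-C * lam ^ (n - k)) ≤ T := by
    have h1 : ∑ k ∈ Finset.range (n+1), (d:ℝ) ^ (n-k) * Real.exp (-C * lam ^ (n - k))
        = ∑ k ∈ Finset.range (n+1), (d:ℝ) ^ k * Real.exp (-C * lam ^ k) := by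
      have := Finset.sum_range_reflect (fun k => (d:ℝ) ^ k * Real.exp (-C * lam ^ k)) (n+1)
      simpa using this
    rw [h1]
    exact hTsum n
  -- single path bound
  have hpath : ∀ a : Fin n → Fin d, (ν {σ | ¬ pathOpen σ a}).toReal ≤ α * T := by
    intro a
    have hNO : {σ : Vtx n d → Bool | ¬ pathOpen σ a}
        = ⋃ j ∈ (Finset.univ : Finset (Fin (n+1))),
            {σ : Vtx n d → Bool | σ (leafVtx a j) = false} := by
      ext σ
      simp only [Set.mem_setOf_eq, Set.mem_iUnion, Finset.mem_univ, exists_true_left,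
        pathOpen, not_forall, Bool.not_eq_true, exists_prop, true_and]
    calc (ν {σ | ¬ pathOpen σ a}).toReal
        ≤ ∑ j ∈ (Finset.univ : Finset (Fin (n+1))),
            (ν {σ : Vtx n d → Bool | σ (leafVtx a j) = false}).toReal := by
          rw [hNO]; exact unionBound ν _ _
      _ ≤ ∑ j ∈ (Finset.univ : Finset (Fin (n+1))), α * Real.exp (-C * lam ^ (n - j.val)) :=
          Finset.sum_le_sum (fun j _ => hclosed (leafVtx a j))
      _ = ∑ k ∈ Finset.range (n+1), α * Real.exp (-C * lam ^ (n - k)) :=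
          Fin.sum_univ_eq_sum_range (fun k => α * Real.exp (-C * lam ^ (n - k))) (n+1)
      _ = α * ∑ k ∈ Finset.range (n+1), Real.exp (-C * lam ^ (n - k)) := by
          rw [Finset.mul_sum]
      _ ≤ α * T := mul_le_mul_of_nonneg_left hrefl hα.le
  have hp0 : ∀ a : Fin n → Fin d, 0 ≤ (ν {σ | ¬ pathOpen σ a}).toReal :=
    fun a => ENNReal.toReal_nonneg
  have hcard1 : 1 ≤ (A.card : ℝ) := by
    exact_mod_cast Nat.one_le_iff_ne_zero.mpr (Finset.card_ne_zero_of_mem hAne.choose_spec)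
  -- mean bound
  have hmean : (∫ σ, (closedCnt A σ : ℝ) ∂ν) = ∑ a ∈ A, (ν {σ | ¬ pathOpen σ a}).toReal :=
    meanFormula ν A
  have hmean_le : (∫ σ, (closedCnt A σ : ℝ) ∂ν) ≤ α * (3 * T + 1) * A.card := by
    rw [hmean]
    calc ∑ a ∈ A, (ν {σ | ¬ pathOpen σ a}).toReal ≤ ∑ a ∈ A, α * T :=
        Finset.sum_le_sum (fun a _ => hpath a)
      _ = A.card * (α * T) := by rw [Finset.sum_const, nsmul_eq_mul]
      _ ≤ A.card * (α * (3 * T + 1)) := by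
          apply mul_le_mul_of_nonneg_left _ (by positivity)
          apply mul_le_mul_of_nonneg_left (by linarith) hα.le
      _ = α * (3 * T + 1) * A.card := by ring
  -- covariance: off-diagonal sum per row
  have hrow : ∀ a ∈ A, ∑ b ∈ A.erase a,
      ((ν ({σ | ¬ pathOpen σ a} ∩ {σ | ¬ pathOpen σ b})).toReal
        - (ν {σ | ¬ pathOpen σ a}).toReal * (ν {σ | ¬ pathOpen σ b}).toReal)
      ≤ 2 * α * T := by
    intro a _
    have key : ∀ b ∈ A.erase a,
        (ν ({σ | ¬ pathOpen σ a} ∩ {σ | ¬ pathOpen σ b})).toReal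
          - (ν {σ | ¬ pathOpen σ a}).toReal * (ν {σ | ¬ pathOpen σ b}).toReal
        ≤ 2 * α * ∑ k ∈ Finset.range (n+1),
            (if (∀ i : Fin n, i.val < k → b i = a i)
              then Real.exp (-C * lam ^ (n - k)) else 0) := by
      intro b hb
      have hba : b ≠ a := Finset.ne_of_mem_erase hb
      have hex : ∃ k, ∃ hk : k < n, a ⟨k, hk⟩ ≠ b ⟨k, hk⟩ := by
        obtain ⟨i, hi⟩ := Function.ne_iff.mp (Ne.symm hba)
        exact ⟨i.val, i.isLt, by simpa [Fin.eta] using hi⟩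
      obtain ⟨hmn, hne⟩ := Nat.find_spec hex
      have hagree : ∀ i : Fin n, i.val < Nat.find hex → a i = b i := by
        intro i hi
        by_contra hcon
        exact Nat.find_min hex hi ⟨i.isLt, by simpa [Fin.eta] using hcon⟩
      have hcov := covBound C lam α ν hclosed hind a b (Nat.find hex) hmn hne hagree
      refine le_trans hcov ?_
      have hflt : Finset.range (Nat.find hex + 1)
          = (Finset.range (n+1)).filter (fun k => k ≤ Nat.find hex) := by
        ext k
        simp only [Finset.mem_range, Finset.mem_filter]
        omega
      have hstep : ∑ k ∈ Finset.range (Nat.find hex + 1), Real.exp (-C * lam ^ (n - k))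
          = ∑ k ∈ Finset.range (n+1),
              (if k ≤ Nat.find hex then Real.exp (-C * lam ^ (n - k)) else 0) := by
        rw [hflt, Finset.sum_filter]
      rw [hstep]
      calc 2 * (α * ∑ k ∈ Finset.range (n+1),
            (if k ≤ Nat.find hex then Real.exp (-C * lam ^ (n - k)) else 0))
          = 2 * α * ∑ k ∈ Finset.range (n+1),
            (if k ≤ Nat.find hex then Real.exp (-C * lam ^ (n - k)) else 0) := by ring
        _ ≤ 2 * α * ∑ k ∈ Finset.range (n+1),
            (if (∀ i : Fin n, i.val < k → b i = a i)
              then Real.exp (-C * lam ^ (n - k)) else 0) := by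
            apply mul_le_mul_of_nonneg_left _ (by positivity)
            apply Finset.sum_le_sum
            intro k _
            by_cases hk : k ≤ Nat.find hex
            · rw [if_pos hk, if_pos]
              intro i hi
              exact (hagree i (lt_of_lt_of_le hi hk)).symm
            · rw [if_neg hk]
              by_cases hc : ∀ i : Fin n, i.val < k → b i = a i
              · rw [if_pos hc]; positivity
              · rw [if_neg hc]
    calc ∑ b ∈ A.erase a,
        ((ν ({σ | ¬ pathOpen σ a} ∩ {σ | ¬ pathOpen σ b})).toReal
          - (ν {σ | ¬ pathOpen σ a}).toReal * (ν {σ | ¬ pathOpen σ b}).toReal)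
        ≤ ∑ b ∈ A.erase a, 2 * α * ∑ k ∈ Finset.range (n+1),
            (if (∀ i : Fin n, i.val < k → b i = a i)
              then Real.exp (-C * lam ^ (n - k)) else 0) := Finset.sum_le_sum key
      _ = 2 * α * ∑ b ∈ A.erase a, ∑ k ∈ Finset.range (n+1),
            (if (∀ i : Fin n, i.val < k → b i = a i)
              then Real.exp (-C * lam ^ (n - k)) else 0) := by rw [Finset.mul_sum]
      _ = 2 * α * ∑ k ∈ Finset.range (n+1), ∑ b ∈ A.erase a,
            (if (∀ i : Fin n, i.val < k → b i = a i)
              then Real.exp (-C * lam ^ (n - k)) else 0) := by rw [Finset.sum_comm]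
      _ ≤ 2 * α * ∑ k ∈ Finset.range (n+1),
            (d:ℝ) ^ (n - k) * Real.exp (-C * lam ^ (n - k)) := by
          apply mul_le_mul_of_nonneg_left _ (by positivity)
          apply Finset.sum_le_sum
          intro k hk
          have hkn : k ≤ n := by
            simp only [Finset.mem_range] at hk
            omega
          calc ∑ b ∈ A.erase a,
              (if (∀ i : Fin n, i.val < k → b i = a i)
                then Real.exp (-C * lam ^ (n - k)) else 0)
              = ∑ b ∈ (A.erase a).filter (fun b => ∀ i : Fin n, i.val < k → b i = a i),
                  Real.exp (-C * lam ^ (n - k)) := (Finset.sum_filter _ _).symm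
            _ = ((A.erase a).filter
                  (fun b => ∀ i : Fin n, i.val < k → b i = a i)).card
                * Real.exp (-C * lam ^ (n - k)) := by
                rw [Finset.sum_const, nsmul_eq_mul]
            _ ≤ (d:ℝ) ^ (n - k) * Real.exp (-C * lam ^ (n - k)) := by
                apply mul_le_mul_of_nonneg_right _ (Real.exp_pos _).le
                calc (((A.erase a).filter
                      (fun b => ∀ i : Fin n, i.val < k → b i = a i)).card : ℝ)
                    ≤ ((Finset.univ.filter
                      (fun b : Fin n → Fin d => ∀ i : Fin n, i.val < k → b i = a i)).card : ℝ) := by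
                      exact_mod_cast Finset.card_le_card
                        (Finset.filter_subset_filter _ (Finset.subset_univ _))
                  _ ≤ (d:ℝ) ^ (n - k) := countAgree a k hkn
      _ ≤ 2 * α * T := mul_le_mul_of_nonneg_left hreflw (by positivity)
  -- variance bound
  have hvar := varFormula ν A
  have hvar_le : (∫ σ, ((closedCnt A σ : ℝ) - ∫ σ', (closedCnt A σ' : ℝ) ∂ν) ^ 2 ∂ν)
      ≤ α * (3 * T + 1) * A.card := by
    rw [hvar]
    have hrowfull : ∀ a ∈ A, ∑ b ∈ A,
        ((ν ({σ | ¬ pathOpen σ a} ∩ {σ | ¬ pathOpen σ b})).toReal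
          - (ν {σ | ¬ pathOpen σ a}).toReal * (ν {σ | ¬ pathOpen σ b}).toReal)
        ≤ α * (3 * T + 1) := by
      intro a ha
      rw [← Finset.sum_erase_add A _ ha]
      have hdiag : (ν ({σ | ¬ pathOpen σ a} ∩ {σ | ¬ pathOpen σ a})).toReal
          - (ν {σ | ¬ pathOpen σ a}).toReal * (ν {σ | ¬ pathOpen σ a}).toReal
          ≤ α * T := by
        rw [Set.inter_self]
        nlinarith [hpath a, hp0 a, sq_nonneg ((ν {σ | ¬ pathOpen σ a}).toReal)]
      have := hrow a ha
      linarith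
    calc ∑ a ∈ A, ∑ b ∈ A,
        ((ν ({σ | ¬ pathOpen σ a} ∩ {σ | ¬ pathOpen σ b})).toReal
          - (ν {σ | ¬ pathOpen σ a}).toReal * (ν {σ | ¬ pathOpen σ b}).toReal)
        ≤ ∑ a ∈ A, α * (3 * T + 1) := Finset.sum_le_sum hrowfull
      _ = A.card * (α * (3 * T + 1)) := by rw [Finset.sum_const, nsmul_eq_mul]
      _ = α * (3 * T + 1) * A.card := by ring
  refine ⟨hmean_le, hvar_le, ?_⟩
  -- Chebyshev
  set N : ℝ := (A.card : ℝ) with hNdef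
  set r : ℝ := N ^ (-(1/3 : ℝ)) with hrdef
  have hN0 : (0:ℝ) < N := by linarith [hcard1]
  have hr0 : 0 < r := Real.rpow_pos_of_pos hN0 _
  set M : ℝ := ∫ σ', (closedCnt A σ' : ℝ) ∂ν with hMdef
  have hM_le : M ≤ α * (3 * T + 1) * N := hmean_le
  set ε : ℝ := (r * N) ^ 2 with hεdef
  have hε0 : 0 < ε := by positivity
  have hsubE : {σ : Vtx n d → Bool | (rootCnt A σ : ℝ) ≤ (1 - α * (3 * T + 1) - r) * N}
      ⊆ {σ : Vtx n d → Bool | ε ≤ ((closedCnt A σ : ℝ) - M) ^ 2} := by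
    intro σ hσ
    simp only [Set.mem_setOf_eq] at hσ ⊢
    have hsplit : (rootCnt A σ : ℝ) + (closedCnt A σ : ℝ) = N := by
      rw [hNdef]
      have := Finset.card_filter_add_card_filter_not
        (s := A) (p := fun a => pathOpen σ a)
      exact_mod_cast this
    have h1 : M + r * N ≤ (closedCnt A σ : ℝ) := by nlinarith
    have h2 : 0 ≤ r * N := by positivity
    calc ε = (r * N) ^ 2 := hεdef
      _ ≤ ((closedCnt A σ : ℝ) - M) ^ 2 := by nlinarith
  have hmar := mul_meas_ge_le_integral_of_nonneg
    (μ := ν) (f := fun σ => ((closedCnt A σ : ℝ) - M) ^ 2)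
    (Filter.Eventually.of_forall (fun σ => sq_nonneg _)) Integrable.of_finite ε
  have hmeas_le : (ν {σ | (rootCnt A σ : ℝ) ≤ (1 - α * (3 * T + 1) - r) * N}).toReal
      ≤ (∫ σ, ((closedCnt A σ : ℝ) - M) ^ 2 ∂ν) / ε := by
    rw [le_div_iff₀ hε0]
    calc (ν {σ | (rootCnt A σ : ℝ) ≤ (1 - α * (3 * T + 1) - r) * N}).toReal * ε
        ≤ (ν {σ | ε ≤ ((closedCnt A σ : ℝ) - M) ^ 2}).toReal * ε := by
          apply mul_le_mul_of_nonneg_right _ hε0.le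
          exact ENNReal.toReal_mono (hfin _) (measure_mono hsubE)
      _ = ε * (ν {σ | ε ≤ ((closedCnt A σ : ℝ) - M) ^ 2}).toReal := mul_comm _ _
      _ ≤ ∫ σ, ((closedCnt A σ : ℝ) - M) ^ 2 ∂ν := hmar
  have hr3 : r ^ 3 * N = 1 := by
    have h1 : r ^ (3:ℕ) = N ^ ((-(1/3 : ℝ)) * 3) := by
      rw [hrdef, ← Real.rpow_natCast (N ^ (-(1/3 : ℝ))) 3, ← Real.rpow_mul hN0.le]
      norm_num
    have h2 : ((-(1/3 : ℝ)) * 3) = -1 := by norm_num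
    rw [h1, h2, Real.rpow_neg_one]
    exact inv_mul_cancel₀ hN0.ne'
  have hdivle : (∫ σ, ((closedCnt A σ : ℝ) - M) ^ 2 ∂ν) / ε ≤ α * (3 * T + 1) * r := by
    rw [div_le_iff₀ hε0]
    have hvle : (∫ σ, ((closedCnt A σ : ℝ) - M) ^ 2 ∂ν) ≤ α * (3 * T + 1) * N := hvar_le
    calc (∫ σ, ((closedCnt A σ : ℝ) - M) ^ 2 ∂ν) ≤ α * (3 * T + 1) * N := hvle
      _ = α * (3 * T + 1) * r * ε := by
          rw [hεdef]
          linear_combination (-(α * (3 * T + 1) * N)) * hr3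
  have hfinal : (ν {σ | (rootCnt A σ : ℝ) ≤ (1 - α * (3 * T + 1) - r) * N}).toReal
      ≤ α * (3 * T + 1) * r := le_trans hmeas_le hdivle
  calc ν {σ | (rootCnt A σ : ℝ) ≤ (1 - α * (3 * T + 1) - r) * N}
      = ENNReal.ofReal ((ν {σ | (rootCnt A σ : ℝ)
          ≤ (1 - α * (3 * T + 1) - r) * N}).toReal) := (ENNReal.ofReal_toReal (hfin _)).symm
    _ ≤ ENNReal.ofReal (α * (3 * T + 1) * r) := ENNReal.ofReal_le_ofReal hfinal
end

section
/- Let ν be a site percolation measure on the complete rooted d-ary tree of depth n satisfying: for any vertex sets W, W' with no common descendants, the configurations on W and W' are independent. Then for any two distinct root-to-leaf paths γ, γ', Cov_ν[1[γ contains a closed vertex], 1[γ' contains a closed vertex]] ≤ ν[the common prefix γ ∩ γ' contains a closed vertex]. -/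
open scoped Classical
open MeasureTheory

/-- Covariance bound on the tree: for a site percolation measure that is
independent over sets without common descendants and distinct leaves `a ≠ a'`,
the covariance of the events "path to `a` (resp. `a'`) contains a closed vertex"
is at most the probability that the common prefix contains a closed vertex. -/
theorem stmt14 (n d : ℕ) (ν : Measure (Vtx n d → Bool)) [IsProbabilityMeasure ν]
    (hind : ∀ W W' : Set (Vtx n d), noCommonDesc W W' →
      ∀ A B : Set (Vtx n d → Bool), MeasurableSet A → MeasurableSet B →
        dependsOnV W A → dependsOnV W' B → ν (A ∩ B) = ν A * ν B)
    (a a' : Fin n → Fin d) (hne : a ≠ a') :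
    (∫ σ, (if pathOpen σ a then (0:ℝ) else 1) * (if pathOpen σ a' then (0:ℝ) else 1) ∂ν)
        - (∫ σ, (if pathOpen σ a then (0:ℝ) else 1) ∂ν) *
          (∫ σ, (if pathOpen σ a' then (0:ℝ) else 1) ∂ν)
      ≤ (ν {σ | ∃ j : Fin (n + 1),
            (∀ i : Fin j.val,
              a ⟨i.val, lt_of_lt_of_le i.isLt (Nat.lt_succ_iff.mp j.isLt)⟩
                = a' ⟨i.val, lt_of_lt_of_le i.isLt (Nat.lt_succ_iff.mp j.isLt)⟩) ∧
            σ (leafVtx a j) = false}).toReal := by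
  classical
  have hex : ∃ m : ℕ, ∃ h : m < n, a ⟨m, h⟩ ≠ a' ⟨m, h⟩ := by
    obtain ⟨i, hi⟩ := Function.ne_iff.mp hne
    exact ⟨i.val, i.isLt, by simpa using hi⟩
  set K := Nat.find hex with hKdef
  obtain ⟨hKn, hKne⟩ := Nat.find_spec hex
  have hKmin : ∀ m (h : m < n), m < K → a ⟨m, h⟩ = a' ⟨m, h⟩ := by
    intro m h hm
    by_contra hc
    exact Nat.find_min hex hm ⟨h, hc⟩
  set A : Set (Vtx n d → Bool) := {σ | ∃ j : Fin (n+1), σ (leafVtx a j) = false} with hAdef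
  set A' : Set (Vtx n d → Bool) := {σ | ∃ j : Fin (n+1), σ (leafVtx a' j) = false} with hA'def
  set C : Set (Vtx n d → Bool) := {σ | ∃ j : Fin (n+1), j.val ≤ K ∧ σ (leafVtx a j) = false} with hCdef
  set D : Set (Vtx n d → Bool) := {σ | ∃ j : Fin (n+1), K < j.val ∧ σ (leafVtx a j) = false} with hDdef
  set D' : Set (Vtx n d → Bool) := {σ | ∃ j : Fin (n+1), K < j.val ∧ σ (leafVtx a' j) = false} with hD'def
  -- measurability
  have measOf : ∀ (p : Fin (n+1) → Prop) (b : Fin n → Fin d),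
      MeasurableSet {σ : Vtx n d → Bool | ∃ j, p j ∧ σ (leafVtx b j) = false} := by
    intro p b
    have : {σ : Vtx n d → Bool | ∃ j, p j ∧ σ (leafVtx b j) = false}
        = ⋃ j ∈ {j | p j}, (fun σ : Vtx n d → Bool => σ (leafVtx b j)) ⁻¹' {false} := by
      ext σ; simp
    rw [this]
    exact MeasurableSet.biUnion (Set.to_countable _)
      fun j _ => (measurable_pi_apply (leafVtx b j)) (measurableSet_singleton false)
  have hmA : MeasurableSet A := by
    have h1 : A = {σ : Vtx n d → Bool | ∃ j, True ∧ σ (leafVtx a j) = false} := by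
      ext σ; simp [hAdef]
    rw [h1]; exact measOf _ a
  have hmA' : MeasurableSet A' := by
    have h1 : A' = {σ : Vtx n d → Bool | ∃ j, True ∧ σ (leafVtx a' j) = false} := by
      ext σ; simp [hA'def]
    rw [h1]; exact measOf _ a'

  have hmC : MeasurableSet C := measOf (fun j => j.val ≤ K) a
  have hmD : MeasurableSet D := measOf (fun j => K < j.val) a
  have hmD' : MeasurableSet D' := measOf (fun j => K < j.val) a'
  -- common prefix vertices agree
  have hleaf : ∀ j : Fin (n+1), j.val ≤ K → leafVtx a j = leafVtx a' j := by
    intro j hj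
    unfold leafVtx
    congr 1
    funext i
    exact hKmin i.val _ (lt_of_lt_of_le i.isLt hj)
  -- splits
  have hAsplit : A = C ∪ D := by
    ext σ
    constructor
    · rintro ⟨j, hj⟩
      rcases le_or_gt j.val K with h | h
      · exact Or.inl ⟨j, h, hj⟩
      · exact Or.inr ⟨j, h, hj⟩
    · rintro (⟨j, _, hj⟩ | ⟨j, _, hj⟩) <;> exact ⟨j, hj⟩
  have hA'split : A' = C ∪ D' := by
    ext σ
    constructor
    · rintro ⟨j, hj⟩
      rcases le_or_gt j.val K with h | h
      · exact Or.inl ⟨j, h, by rw [hleaf j h]; exact hj⟩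
      · exact Or.inr ⟨j, h, hj⟩
    · rintro (⟨j, h, hj⟩ | ⟨j, _, hj⟩)
      · exact ⟨j, by rw [← hleaf j h]; exact hj⟩
      · exact ⟨j, hj⟩
  -- independence of D and D'
  have hWW' : noCommonDesc {v : Vtx n d | ∃ j : Fin (n+1), K < j.val ∧ v = leafVtx a j}
      {v : Vtx n d | ∃ j : Fin (n+1), K < j.val ∧ v = leafVtx a' j} := by
    rintro ⟨u, ⟨v, ⟨j, hj, rfl⟩, h1, h2⟩, ⟨v', ⟨j', hj', rfl⟩, h1', h2'⟩⟩
    have e1 := h2 ⟨K, hj⟩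
    have e2 := h2' ⟨K, hj'⟩
    exact hKne (e1.trans e2.symm)
  have hDdep : dependsOnV {v : Vtx n d | ∃ j : Fin (n+1), K < j.val ∧ v = leafVtx a j} D := by
    intro σ τ h
    constructor
    · rintro ⟨j, hj, hs⟩; exact ⟨j, hj, by rw [← h _ ⟨j, hj, rfl⟩]; exact hs⟩
    · rintro ⟨j, hj, hs⟩; exact ⟨j, hj, by rw [h _ ⟨j, hj, rfl⟩]; exact hs⟩
  have hD'dep : dependsOnV {v : Vtx n d | ∃ j : Fin (n+1), K < j.val ∧ v = leafVtx a' j} D' := by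
    intro σ τ h
    constructor
    · rintro ⟨j, hj, hs⟩; exact ⟨j, hj, by rw [← h _ ⟨j, hj, rfl⟩]; exact hs⟩
    · rintro ⟨j, hj, hs⟩; exact ⟨j, hj, by rw [h _ ⟨j, hj, rfl⟩]; exact hs⟩
  have hmul : ν (D ∩ D') = ν D * ν D' := hind _ _ hWW' D D' hmD hmD' hDdep hD'dep
  -- key ENNReal inequality
  have hsub : A ∩ A' ⊆ C ∪ D ∩ D' := by
    rintro σ ⟨h1, h2⟩
    rw [hAsplit] at h1; rw [hA'split] at h2
    rcases h1 with h1 | h1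
    · exact Or.inl h1
    rcases h2 with h2 | h2
    · exact Or.inl h2
    · exact Or.inr ⟨h1, h2⟩
  have hDA : D ⊆ A := by rw [hAsplit]; exact Set.subset_union_right
  have hD'A' : D' ⊆ A' := by rw [hA'split]; exact Set.subset_union_right
  have key : ν (A ∩ A') ≤ ν C + ν A * ν A' := by
    calc ν (A ∩ A') ≤ ν (C ∪ D ∩ D') := measure_mono hsub
      _ ≤ ν C + ν (D ∩ D') := measure_union_le _ _
      _ = ν C + ν D * ν D' := by rw [hmul]
      _ ≤ ν C + ν A * ν A' := by
          exact add_le_add le_rfl (mul_le_mul' (measure_mono hDA) (measure_mono hD'A'))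
  -- rewrite integrals
  have hAiff : ∀ σ, σ ∈ A ↔ ¬ pathOpen σ a := by
    intro σ; simp [hAdef, pathOpen]
  have hA'iff : ∀ σ, σ ∈ A' ↔ ¬ pathOpen σ a' := by
    intro σ; simp [hA'def, pathOpen]
  have hiA : (∫ σ, (if pathOpen σ a then (0:ℝ) else 1) ∂ν) = (ν A).toReal := by
    rw [show (ν A).toReal = ν.real A from rfl, ← integral_indicator_one hmA]
    congr 1
    funext σ
    by_cases h : pathOpen σ a
    · have hA : σ ∉ A := fun hs => (hAiff σ).mp hs h
      simp [h, hA, Set.indicator_apply]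
    · have hA : σ ∈ A := (hAiff σ).mpr h
      simp [h, hA, Set.indicator_apply]
  have hiA' : (∫ σ, (if pathOpen σ a' then (0:ℝ) else 1) ∂ν) = (ν A').toReal := by
    rw [show (ν A').toReal = ν.real A' from rfl, ← integral_indicator_one hmA']
    congr 1
    funext σ
    by_cases h : pathOpen σ a'
    · have hA : σ ∉ A' := fun hs => (hA'iff σ).mp hs h
      simp [h, hA, Set.indicator_apply]
    · have hA : σ ∈ A' := (hA'iff σ).mpr h
      simp [h, hA, Set.indicator_apply]
  have hiAA' : (∫ σ, (if pathOpen σ a then (0:ℝ) else 1) * (if pathOpen σ a' then (0:ℝ) else 1) ∂ν)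
      = (ν (A ∩ A')).toReal := by
    rw [show (ν (A ∩ A')).toReal = ν.real (A ∩ A') from rfl, ← integral_indicator_one (hmA.inter hmA')]
    congr 1
    funext σ
    by_cases h : pathOpen σ a <;> by_cases h' : pathOpen σ a' <;>
      simp [h, h', Set.indicator_apply, Set.mem_inter_iff, hAiff σ, hA'iff σ]
  -- rewrite the RHS set
  have hRHS : {σ : Vtx n d → Bool | ∃ j : Fin (n + 1),
      (∀ i : Fin j.val,
        a ⟨i.val, lt_of_lt_of_le i.isLt (Nat.lt_succ_iff.mp j.isLt)⟩
          = a' ⟨i.val, lt_of_lt_of_le i.isLt (Nat.lt_succ_iff.mp j.isLt)⟩) ∧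
      σ (leafVtx a j) = false} = C := by
    ext σ
    constructor
    · rintro ⟨j, hcond, hs⟩
      refine ⟨j, ?_, hs⟩
      by_contra hlt
      push_neg at hlt
      exact hKne (hcond ⟨K, hlt⟩)
    · rintro ⟨j, hj, hs⟩
      exact ⟨j, fun i => hKmin i.val _ (lt_of_lt_of_le i.isLt hj), hs⟩
  rw [hiA, hiA', hiAA', hRHS]
  -- finish
  have hCne : ν C ≠ ⊤ := measure_ne_top _ _
  have hmulne : ν A * ν A' ≠ ⊤ := ENNReal.mul_ne_top (measure_ne_top _ _) (measure_ne_top _ _)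
  have key' := ENNReal.toReal_mono (by finiteness) key
  rw [ENNReal.toReal_add hCne hmulne, ENNReal.toReal_mul] at key'
  linarith
end

section
/- Let 𝔾 be a locally finite infinite graph and let ker ∂^𝔾 denote the group of ℤ/qℤ-valued divergence-free 1-forms (cycles) on 𝔾, a compact abelian group under pointwise addition with the topology of pointwise convergence. Let (ker ∂^𝔾)⁰ denote the closure of the subgroup of finitely supported cycles. Then the extremal Gibbs measures for the uniform cycle model (i.e. extremal probability measures on ker ∂^𝔾 invariant under the addition action of finitely supported cycles) are in bijection with the cosets in ker ∂^𝔾/(ker ∂^𝔾)⁰: each coset carries exactly one invariant measure (the Haar measure of the coset), and these are exactly the extremal invariant measures. -/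
set_option linter.unusedSectionVars false
set_option maxHeartbeats 1000000

open MeasureTheory Filter TopologicalSpace Topology
open scoped ENNReal NNReal Pointwise

noncomputable instance (q : ℕ) : TopologicalSpace (ZMod q) := ⊥
noncomputable instance (q : ℕ) : MeasurableSpace (ZMod q) := ⊤

instance (q : ℕ) : DiscreteTopology (ZMod q) := ⟨rfl⟩
instance (q : ℕ) : BorelSpace (ZMod q) := ⟨(borel_eq_top_of_discrete).symm⟩
instance (q : ℕ) : Countable (ZMod q) := by
  cases q
  · exact (inferInstance : Countable ℤ)
  · infer_instance


variable {V : Type*}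

/-- `η` is a `ℤ/qℤ`-valued divergence-free 1-form (cycle) on the graph `G`. -/
def IsCycle {q : ℕ} (G : SimpleGraph V) (hlf : ∀ v : V, Fintype (G.neighborSet v))
    (η : V → V → ZMod q) : Prop :=
  (∀ v w, η v w = - η w v) ∧ (∀ v w, ¬ G.Adj v w → η v w = 0) ∧
  (∀ v, ∑ w ∈ @SimpleGraph.neighborFinset V G v (hlf v), η v w = 0)

/-- The set of finitely supported cycles. -/
def FinCycles {q : ℕ} (G : SimpleGraph V) (hlf : ∀ v : V, Fintype (G.neighborSet v)) :
    Set (V → V → ZMod q) :=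
  {η | IsCycle G hlf η ∧ {p : V × V | η p.1 p.2 ≠ 0}.Finite}

/-- `μ` is a Gibbs measure for the uniform cycle: a probability measure supported on
cycles and invariant under translation by every finitely supported cycle. -/
def IsUCGibbs {q : ℕ} (G : SimpleGraph V) (hlf : ∀ v : V, Fintype (G.neighborSet v))
    (μ : Measure (V → V → ZMod q)) : Prop :=
  IsProbabilityMeasure μ ∧ μ {η | IsCycle G hlf η} = 1 ∧
  ∀ η₀ ∈ FinCycles (q := q) G hlf, Measure.map (fun η => η + η₀) μ = μ

/-- `μ` is extremal among Gibbs measures of the uniform cycle. -/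
def IsExtremalUCGibbs {q : ℕ} (G : SimpleGraph V)
    (hlf : ∀ v : V, Fintype (G.neighborSet v))
    (μ : Measure (V → V → ZMod q)) : Prop :=
  IsUCGibbs G hlf μ ∧
  ∀ μ₁ μ₂ : Measure (V → V → ZMod q), IsUCGibbs G hlf μ₁ → IsUCGibbs G hlf μ₂ →
    ∀ t : ℝ≥0∞, 0 < t → t < 1 → μ = t • μ₁ + (1 - t) • μ₂ → μ₁ = μ₂

/-- The coset of the closure of the finitely supported cycles determined by `z`. -/
def Coset {q : ℕ} (G : SimpleGraph V) (hlf : ∀ v : V, Fintype (G.neighborSet v))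
    (z : V → V → ZMod q) : Set (V → V → ZMod q) :=
  {η | η - z ∈ closure (FinCycles (q := q) G hlf)}

section Abstract
variable {X : Type*} [AddCommGroup X] [TopologicalSpace X] [IsTopologicalAddGroup X]
  [MeasurableSpace X] [BorelSpace X] [T2Space X] [SecondCountableTopology X] [CompactSpace X]

theorem unique_invariant_measure (S : Set X) (hSm : MeasurableSet S)
    (ν₁ ν₂ : Measure X) [IsProbabilityMeasure ν₁] [IsProbabilityMeasure ν₂]
    (h₁ : ∀ h ∈ S, Measure.map (· + h) ν₁ = ν₁)
    (h₂ : ∀ h ∈ S, Measure.map (· + h) ν₂ = ν₂)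
    (hS₁ : ν₁ S = 1) (hS₂ : ν₂ S = 1) : ν₁ = ν₂ := by
  apply ext_of_forall_lintegral_eq_of_IsFiniteMeasure
  intro f
  have hfm : Measurable fun x : X => (f x : ℝ≥0∞) := f.measurable_coe_ennreal_comp
  have hmeas : ∀ t : X, Measurable fun x : X => x + t := fun t => measurable_id.add_const t
  have key : ∫⁻ y, ∫⁻ x, (f (x + y) : ℝ≥0∞) ∂ν₁ ∂ν₂ = ∫⁻ x, (f x : ℝ≥0∞) ∂ν₁ := by
    have hae : ∀ᵐ y ∂ν₂, y ∈ S := by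
      rw [ae_iff]; exact (prob_compl_eq_zero_iff hSm).2 hS₂
    calc ∫⁻ y, ∫⁻ x, (f (x + y) : ℝ≥0∞) ∂ν₁ ∂ν₂
        = ∫⁻ _, ∫⁻ x, (f x : ℝ≥0∞) ∂ν₁ ∂ν₂ := by
          refine lintegral_congr_ae (hae.mono fun y hy => ?_)
          show ∫⁻ x, (f (x + y) : ℝ≥0∞) ∂ν₁ = ∫⁻ x, (f x : ℝ≥0∞) ∂ν₁
          rw [← lintegral_map hfm (hmeas y), h₁ y hy]
      _ = ∫⁻ x, (f x : ℝ≥0∞) ∂ν₁ := by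
          rw [lintegral_const, measure_univ, mul_one]
  have key2 : ∫⁻ x, ∫⁻ y, (f (x + y) : ℝ≥0∞) ∂ν₂ ∂ν₁ = ∫⁻ x, (f x : ℝ≥0∞) ∂ν₂ := by
    have hae : ∀ᵐ x ∂ν₁, x ∈ S := by
      rw [ae_iff]; exact (prob_compl_eq_zero_iff hSm).2 hS₁
    refine Eq.trans (lintegral_congr_ae (hae.mono fun x hx => ?_))
      ((lintegral_const _).trans (by rw [measure_univ, mul_one]))
    show ∫⁻ y, (f (x + y) : ℝ≥0∞) ∂ν₂ = ∫⁻ x, (f x : ℝ≥0∞) ∂ν₂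
    have hc : (fun y => (f (x + y) : ℝ≥0∞)) = fun y => (f (y + x) : ℝ≥0∞) := by
      funext y; rw [add_comm]
    rw [hc, ← lintegral_map hfm (hmeas x), h₂ x hx]
  have swap : ∫⁻ y, ∫⁻ x, (f (x + y) : ℝ≥0∞) ∂ν₁ ∂ν₂
      = ∫⁻ x, ∫⁻ y, (f (x + y) : ℝ≥0∞) ∂ν₂ ∂ν₁ := by
    rw [lintegral_lintegral_swap]
    exact ((hfm.comp measurable_add).comp measurable_swap).aemeasurable
  rw [← key, swap, key2]

theorem invariant_of_mem_closure (D : Set X) (ν : Measure X) [IsProbabilityMeasure ν]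
    (hD : ∀ d ∈ D, Measure.map (· + d) ν = ν) :
    ∀ h ∈ closure D, Measure.map (· + h) ν = ν := by
  intro h hh
  have hmeas : ∀ t : X, Measurable fun x : X => x + t := fun t => measurable_id.add_const t
  haveI : ∀ t : X, IsProbabilityMeasure (Measure.map (· + t) ν) := fun t =>
    Measure.isProbabilityMeasure_map (hmeas t).aemeasurable
  apply ext_of_forall_lintegral_eq_of_IsFiniteMeasure
  intro f
  have hfm : Measurable fun x : X => (f x : ℝ≥0∞) := f.measurable_coe_ennreal_comp
  set g : X → ℝ := fun t => ∫ x, (f (x + t) : ℝ) ∂ν with hgdef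
  have hgc : Continuous g := by
    rw [continuous_iff_continuousAt]
    intro t₀
    have hb : ∀ (t : X) (x : X), ‖(f (x + t) : ℝ)‖ ≤ ((nndist f 0 : ℝ≥0) : ℝ) := by
      intro t x
      rw [Real.norm_of_nonneg (f (x + t)).coe_nonneg]
      exact_mod_cast BoundedContinuousFunction.NNReal.upper_bound f (x + t)
    exact continuousAt_of_dominated
      (Eventually.of_forall fun t =>
        (NNReal.continuous_coe.comp
          (f.continuous.comp (continuous_id.add continuous_const))).aestronglyMeasurable)
      (Eventually.of_forall fun t => Eventually.of_forall fun x => hb t x)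
      (integrable_const _)
      (Eventually.of_forall fun x =>
        ((NNReal.continuous_coe.comp
          (f.continuous.comp (continuous_const.add continuous_id))).continuousAt))
  have hgmap : ∀ t : X, g t = (∫⁻ x, (f x : ℝ≥0∞) ∂(Measure.map (· + t) ν)).toReal := by
    intro t
    calc g t = ∫ y, (f y : ℝ) ∂(Measure.map (· + t) ν) :=
          (integral_map (hmeas t).aemeasurable
            (NNReal.continuous_coe.comp f.continuous).aestronglyMeasurable).symm
      _ = (∫⁻ x, (f x : ℝ≥0∞) ∂(Measure.map (· + t) ν)).toReal :=
          (BoundedContinuousFunction.toReal_lintegral_coe_eq_integral f _).symm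
  have h0 : g 0 = (∫⁻ x, (f x : ℝ≥0∞) ∂ν).toReal := by
    rw [hgmap 0, show (fun x : X => x + 0) = id from funext fun x => add_zero x, Measure.map_id]
  have hgD : Set.EqOn g (fun _ => g 0) D := by
    intro d hd
    show g d = g 0
    rw [hgmap d, hD d hd, h0]
  have hgh : g h = g 0 := hgD.closure hgc continuous_const hh
  have h1 : ∫⁻ x, (f x : ℝ≥0∞) ∂(Measure.map (· + h) ν) ≠ ∞ :=
    (f.lintegral_lt_top_of_nnreal _).ne
  have h2 : ∫⁻ x, (f x : ℝ≥0∞) ∂ν ≠ ∞ := (f.lintegral_lt_top_of_nnreal _).ne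
  have := hgmap h
  rw [hgh, h0] at this
  exact (ENNReal.toReal_eq_toReal_iff' h1 h2).mp this.symm
end Abstract

section Haar
variable {X : Type*} [AddCommGroup X] [TopologicalSpace X] [IsTopologicalAddGroup X]
  [MeasurableSpace X] [BorelSpace X] [T2Space X] [SecondCountableTopology X] [CompactSpace X]

variable (S : AddSubgroup X)

/-- Haar probability measure of a closed subgroup, as a measure on the ambient group. -/
noncomputable def subHaar (hSc : IsClosed (S : Set X)) : Measure X :=
  haveI : CompactSpace S := isCompact_iff_compactSpace.mp hSc.isCompact
  haveI : BorelSpace S := Subtype.borelSpace (S : Set X)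
  Measure.map (Subtype.val) (Measure.addHaarMeasure (⊤ : PositiveCompacts S))

variable (hSc : IsClosed (S : Set X))

theorem subHaar_prob : IsProbabilityMeasure (subHaar S hSc) := by
  haveI : CompactSpace S := isCompact_iff_compactSpace.mp hSc.isCompact
  haveI : BorelSpace S := Subtype.borelSpace (S : Set X)
  rw [subHaar]
  haveI : IsProbabilityMeasure (Measure.addHaarMeasure (⊤ : PositiveCompacts S)) := by
    constructor
    rw [← PositiveCompacts.coe_top (α := S)]
    exact Measure.addHaarMeasure_self
  exact Measure.isProbabilityMeasure_map continuous_subtype_val.measurable.aemeasurable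

theorem subHaar_self : subHaar S hSc S = 1 := by
  haveI : CompactSpace S := isCompact_iff_compactSpace.mp hSc.isCompact
  haveI : BorelSpace S := Subtype.borelSpace (S : Set X)
  rw [subHaar, Measure.map_apply continuous_subtype_val.measurable hSc.measurableSet]
  have : (Subtype.val ⁻¹' (S : Set X) : Set S) = Set.univ := by
    ext x; simp [x.2]
  rw [this]
  rw [← PositiveCompacts.coe_top (α := S)]
  exact Measure.addHaarMeasure_self

theorem subHaar_invariant {h : X} (hh : h ∈ S) :
    Measure.map (· + h) (subHaar S hSc) = subHaar S hSc := by
  haveI : CompactSpace S := isCompact_iff_compactSpace.mp hSc.isCompact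
  haveI : BorelSpace S := Subtype.borelSpace (S : Set X)
  rw [subHaar, Measure.map_map (measurable_add_const h) continuous_subtype_val.measurable]
  have key : ((· + h) ∘ (Subtype.val : S → X)) = Subtype.val ∘ (· + (⟨h, hh⟩ : S)) := rfl
  rw [key, ← Measure.map_map continuous_subtype_val.measurable (measurable_add_const _)]
  congr 1
  have : (· + (⟨h, hh⟩ : S)) = ((⟨h, hh⟩ : S) + ·) := funext fun x => add_comm _ _
  rw [this]
  exact MeasureTheory.map_add_left_eq_self _ _
end Haar
section Groups
variable {q : ℕ} (G : SimpleGraph V) (hlf : ∀ v : V, Fintype (G.neighborSet v))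

/-- cycles as an additive subgroup -/
def cycleGroup : AddSubgroup (V → V → ZMod q) where
  carrier := {η | IsCycle G hlf η}
  zero_mem' := ⟨fun _ _ => by simp, fun _ _ _ => rfl, fun v => by simp⟩
  add_mem' := by
    rintro a b ⟨ha1, ha2, ha3⟩ ⟨hb1, hb2, hb3⟩
    refine ⟨fun v w => by simp [Pi.add_apply, ha1 v w, hb1 v w]; ring,
      fun v w h => by simp [ha2 v w h, hb2 v w h],
      fun v => by simp [Finset.sum_add_distrib, ha3 v, hb3 v]⟩
  neg_mem' := by
    rintro a ⟨ha1, ha2, ha3⟩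
    refine ⟨fun v w => by simp [ha1 v w], fun v w h => by simp [ha2 v w h],
      fun v => by simp [Finset.sum_neg_distrib, ha3 v]⟩

def finCycleGroup : AddSubgroup (V → V → ZMod q) where
  carrier := FinCycles G hlf
  zero_mem' := ⟨(cycleGroup G hlf).zero_mem, by simp⟩
  add_mem' := by
    rintro a b ⟨ha, ha'⟩ ⟨hb, hb'⟩
    refine ⟨(cycleGroup G hlf).add_mem ha hb, (ha'.union hb').subset ?_⟩
    intro p hp
    by_contra h
    simp only [Set.mem_union, Set.mem_setOf_eq, not_or, not_not] at h hp
    exact hp (by simp [Pi.add_apply, h.1, h.2])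
  neg_mem' := by
    rintro a ⟨ha, ha'⟩
    exact ⟨(cycleGroup G hlf).neg_mem ha, ha'.subset (by intro p; simp)⟩

theorem isClosed_cycleGroup :
    IsClosed ((cycleGroup (q := q) G hlf : Set (V → V → ZMod q))) := by
  have h1 : ∀ v w : V, IsClosed {η : V → V → ZMod q | η v w = - η w v} :=
    fun v w => isClosed_eq (by fun_prop) (by fun_prop)
  have h2 : ∀ v w : V, IsClosed {η : V → V → ZMod q | η v w = 0} :=
    fun v w => isClosed_eq (by fun_prop) continuous_const
  have h3 : ∀ v : V, IsClosed {η : V → V → ZMod q |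
      ∑ w ∈ @SimpleGraph.neighborFinset V G v (hlf v), η v w = 0} :=
    fun v => isClosed_eq (by fun_prop) continuous_const
  have : (cycleGroup (q := q) G hlf : Set (V → V → ZMod q)) =
      (⋂ v, ⋂ w, {η : V → V → ZMod q | η v w = - η w v}) ∩
      ((⋂ v, ⋂ w, ⋂ (_ : ¬ G.Adj v w), {η : V → V → ZMod q | η v w = 0}) ∩
      (⋂ v, {η : V → V → ZMod q |
        ∑ w ∈ @SimpleGraph.neighborFinset V G v (hlf v), η v w = 0})) := by
    ext η
    simp only [Set.mem_inter_iff, Set.mem_iInter, Set.mem_setOf_eq]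
    exact Iff.rfl
  rw [this]
  exact (isClosed_iInter fun v => isClosed_iInter fun w => h1 v w).inter
    ((isClosed_iInter fun v => isClosed_iInter fun w => isClosed_iInter fun _ => h2 v w).inter
      (isClosed_iInter fun v => h3 v))
end Groups

section Concrete
variable [Countable V] {q : ℕ} (G : SimpleGraph V) (hlf : ∀ v : V, Fintype (G.neighborSet v))

/-- the closure of the finitely supported cycles, as a subgroup -/
noncomputable def Hgrp : AddSubgroup (V → V → ZMod q) := (finCycleGroup G hlf).topologicalClosure

theorem Hgrp_coe : (Hgrp (q := q) G hlf : Set (V → V → ZMod q)) =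
    closure (FinCycles G hlf) := AddSubgroup.topologicalClosure_coe

theorem Hgrp_closed : IsClosed ((Hgrp (q := q) G hlf : Set (V → V → ZMod q))) :=
  AddSubgroup.isClosed_topologicalClosure _

theorem Hgrp_le : Hgrp (q := q) G hlf ≤ cycleGroup G hlf :=
  AddSubgroup.topologicalClosure_minimal _ (fun x hx => hx.1) (isClosed_cycleGroup G hlf)

theorem coset_eq (z : V → V → ZMod q) :
    Coset G hlf z = (fun η => η - z) ⁻¹' (Hgrp (q := q) G hlf : Set (V → V → ZMod q)) := by
  rw [Hgrp_coe]; rfl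

theorem coset_closed (z : V → V → ZMod q) : IsClosed (Coset G hlf z) := by
  rw [coset_eq]
  exact (Hgrp_closed G hlf).preimage (continuous_id.sub continuous_const)

theorem coset_measurable (z : V → V → ZMod q) : MeasurableSet (Coset G hlf z) :=
  (coset_closed G hlf z).measurableSet

theorem cycles_measurable : MeasurableSet {η : V → V → ZMod q | IsCycle G hlf η} :=
  (isClosed_cycleGroup G hlf).measurableSet

theorem coset_subset_cycles {z : V → V → ZMod q} (hz : IsCycle G hlf z) :
    Coset G hlf z ⊆ {η | IsCycle G hlf η} := by
  intro η hη
  rw [coset_eq] at hη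
  have h1 : η - z ∈ cycleGroup G hlf := Hgrp_le G hlf hη
  have := (cycleGroup G hlf).add_mem h1 hz
  exact (by simpa using this : η ∈ cycleGroup G hlf)

theorem mem_coset_self (z : V → V → ZMod q) : z ∈ Coset G hlf z := by
  rw [coset_eq]
  simp only [Set.mem_preimage, sub_self, SetLike.mem_coe]
  exact (Hgrp (q := q) G hlf).zero_mem

/-- the canonical Gibbs measure of a coset -/
noncomputable def cosetMeasure [NeZero q] (z : V → V → ZMod q) :
    Measure (V → V → ZMod q) :=
  Measure.map (· + z) (subHaar (Hgrp G hlf) (Hgrp_closed G hlf))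

section CM
variable [NeZero q] (z : V → V → ZMod q)

theorem cosetMeasure_prob : IsProbabilityMeasure (cosetMeasure G hlf z) := by
  haveI := subHaar_prob (Hgrp (q := q) G hlf) (Hgrp_closed G hlf)
  exact Measure.isProbabilityMeasure_map (measurable_add_const z).aemeasurable

theorem cosetMeasure_coset : cosetMeasure G hlf z (Coset G hlf z) = 1 := by
  rw [cosetMeasure, Measure.map_apply (measurable_add_const z) (coset_measurable G hlf z)]
  have : (· + z) ⁻¹' (Coset G hlf z) = (Hgrp (q := q) G hlf : Set (V → V → ZMod q)) := by
    ext x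
    rw [coset_eq]
    simp [Set.mem_preimage, add_sub_cancel_right]
  rw [this]
  exact subHaar_self _ _

theorem cosetMeasure_invariant {η₀ : V → V → ZMod q} (hη₀ : η₀ ∈ Hgrp (q := q) G hlf) :
    Measure.map (· + η₀) (cosetMeasure G hlf z) = cosetMeasure G hlf z := by
  rw [cosetMeasure, Measure.map_map (measurable_add_const η₀) (measurable_add_const z)]
  have : ((· + η₀) ∘ (· + z)) = ((· + z) ∘ (· + η₀) : (V → V → ZMod q) → _) := by
    funext x
    simp only [Function.comp_apply]
    abel
  rw [this, ← Measure.map_map (measurable_add_const z) (measurable_add_const η₀),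
    subHaar_invariant _ _ hη₀]

theorem cosetMeasure_gibbs (hz : IsCycle G hlf z) : IsUCGibbs G hlf (cosetMeasure G hlf z) := by
  haveI := cosetMeasure_prob G hlf z
  refine ⟨inferInstance, ?_, ?_⟩
  · refine le_antisymm prob_le_one ?_
    rw [← cosetMeasure_coset G hlf z]
    exact measure_mono (coset_subset_cycles G hlf hz)
  · intro η₀ hη₀
    exact cosetMeasure_invariant G hlf z (AddSubgroup.le_topologicalClosure _ hη₀)

/-- Any Gibbs measure is invariant under the full closed group `Hgrp`. -/
theorem gibbs_invariant {μ : Measure (V → V → ZMod q)} (hμ : IsUCGibbs G hlf μ)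
    {h : V → V → ZMod q} (hh : h ∈ Hgrp (q := q) G hlf) :
    Measure.map (· + h) μ = μ := by
  haveI := hμ.1
  refine invariant_of_mem_closure (FinCycles G hlf) μ (fun d hd => hμ.2.2 d hd) h ?_
  rw [← Hgrp_coe]; exact hh

/-- Uniqueness of the Gibbs measure on a given coset. -/
theorem coset_unique {μ' : Measure (V → V → ZMod q)} (hμ' : IsUCGibbs G hlf μ')
    (hc : μ' (Coset G hlf z) = 1) : μ' = cosetMeasure G hlf z := by
  haveI := hμ'.1
  haveI := cosetMeasure_prob G hlf z
  have hmeas : ∀ t : V → V → ZMod q, Measurable fun x : V → V → ZMod q => x + t :=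
    fun t => measurable_add_const t
  -- shift both measures by `-z`
  set T : (V → V → ZMod q) → (V → V → ZMod q) := (· + (-z)) with hT
  have hTm : Measurable T := hmeas _
  have hshift : ∀ (ν : Measure (V → V → ZMod q)), Measure.map (· + z) (Measure.map T ν) = ν := by
    intro ν
    rw [Measure.map_map (hmeas z) hTm]
    have : ((· + z) ∘ T) = id := by funext x; simp [hT]
    rw [this, Measure.map_id]
  have hpre : T ⁻¹' (Hgrp (q := q) G hlf : Set (V → V → ZMod q)) = Coset G hlf z := by
    ext x
    rw [coset_eq]
    simp [hT, Set.mem_preimage, sub_eq_add_neg]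
  have hHm : MeasurableSet (Hgrp (q := q) G hlf : Set (V → V → ZMod q)) :=
    (Hgrp_closed G hlf).measurableSet
  have hinv : ∀ (ν : Measure (V → V → ZMod q)),
      (∀ h ∈ Hgrp (q := q) G hlf, Measure.map (· + h) ν = ν) →
      ∀ h ∈ (Hgrp (q := q) G hlf : Set (V → V → ZMod q)), Measure.map (· + h) (Measure.map T ν)
        = Measure.map T ν := by
    intro ν hν h hh
    rw [Measure.map_map (hmeas h) hTm]
    have : ((· + h) ∘ T) = (T ∘ (· + h) : (V → V → ZMod q) → _) := by
      funext x; simp [hT]; abel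
    rw [this, ← Measure.map_map hTm (hmeas h), hν h hh]
  haveI : IsProbabilityMeasure (Measure.map T μ') := Measure.isProbabilityMeasure_map hTm.aemeasurable
  haveI : IsProbabilityMeasure (Measure.map T (cosetMeasure G hlf z)) :=
    Measure.isProbabilityMeasure_map hTm.aemeasurable
  have key : Measure.map T μ' = Measure.map T (cosetMeasure G hlf z) := by
    apply unique_invariant_measure (Hgrp (q := q) G hlf : Set (V → V → ZMod q)) hHm
    · exact hinv μ' (fun h hh => gibbs_invariant G hlf hμ' hh)
    · exact hinv _ (fun h hh => cosetMeasure_invariant G hlf z hh)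
    · rw [Measure.map_apply hTm hHm, hpre]; exact hc
    · rw [Measure.map_apply hTm hHm, hpre]; exact cosetMeasure_coset G hlf z
  calc μ' = Measure.map (· + z) (Measure.map T μ') := (hshift μ').symm
    _ = Measure.map (· + z) (Measure.map T (cosetMeasure G hlf z)) := by rw [key]
    _ = cosetMeasure G hlf z := hshift _

theorem extremal_zero_one {μ : Measure (V → V → ZMod q)} (hμ : IsExtremalUCGibbs G hlf μ)
    {A : Set (V → V → ZMod q)} (hA : MeasurableSet A)
    (hinv : ∀ η₀ ∈ FinCycles (q := q) G hlf, (fun η => η + η₀) ⁻¹' A = A) :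
    μ A = 0 ∨ μ A = 1 := by
  haveI := hμ.1.1
  by_contra hcon
  push_neg at hcon
  obtain ⟨h0, h1⟩ := hcon
  set a := μ A with ha
  have ha1 : a ≤ 1 := prob_le_one
  have hatop : a ≠ ∞ := (ha1.trans_lt ENNReal.one_lt_top).ne
  have hactop : (1 : ℝ≥0∞) - a ≠ ∞ := (tsub_le_self.trans_lt ENNReal.one_lt_top).ne
  have h1a0 : (1 : ℝ≥0∞) - a ≠ 0 := fun h =>
    h1 (le_antisymm ha1 (tsub_eq_zero_iff_le.mp h))
  have hac : μ Aᶜ = 1 - a := by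
    rw [measure_compl hA (measure_ne_top μ A), measure_univ, ha]
  have hcyc0 : μ {η | IsCycle G hlf η}ᶜ = 0 :=
    (prob_compl_eq_zero_iff (cycles_measurable G hlf)).2 hμ.1.2.1
  set μ₁ := a⁻¹ • μ.restrict A with hμ₁
  set μ₂ := (1 - a)⁻¹ • μ.restrict Aᶜ with hμ₂
  have hres : ∀ (B : Set (V → V → ZMod q)), MeasurableSet B →
      (∀ η₀ ∈ FinCycles (q := q) G hlf, (fun η => η + η₀) ⁻¹' B = B) →
      ∀ η₀ ∈ FinCycles (q := q) G hlf,
        Measure.map (fun η => η + η₀) (μ.restrict B) = μ.restrict B := by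
    intro B hB hBinv η₀ hη₀
    have h1' := Measure.restrict_map (measurable_add_const η₀) hB (μ := μ)
    rw [hμ.1.2.2 η₀ hη₀, hBinv η₀ hη₀] at h1'
    exact h1'.symm
  have gibbs : ∀ (B : Set (V → V → ZMod q)), MeasurableSet B →
      (∀ η₀ ∈ FinCycles (q := q) G hlf, (fun η => η + η₀) ⁻¹' B = B) →
      ∀ b : ℝ≥0∞, b = μ B → b ≠ 0 → b ≠ ∞ →
      IsUCGibbs G hlf (b⁻¹ • μ.restrict B) := by
    intro B hB hBinv b hb hb0 hbt
    haveI hprob : IsProbabilityMeasure (b⁻¹ • μ.restrict B) := by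
      constructor
      rw [Measure.smul_apply, Measure.restrict_apply_univ, smul_eq_mul, ← hb,
        ENNReal.inv_mul_cancel hb0 hbt]
    refine ⟨hprob, ?_, ?_⟩
    · rw [Measure.smul_apply, Measure.restrict_apply (cycles_measurable G hlf),
        Set.inter_comm, measure_inter_conull hcyc0, smul_eq_mul, ← hb,
        ENNReal.inv_mul_cancel hb0 hbt]
    · intro η₀ hη₀
      rw [Measure.map_smul, hres B hB hBinv η₀ hη₀]
  have hinvc : ∀ η₀ ∈ FinCycles (q := q) G hlf, (fun η => η + η₀) ⁻¹' Aᶜ = Aᶜ := by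
    intro η₀ hη₀
    rw [Set.preimage_compl, hinv η₀ hη₀]
  have g1 : IsUCGibbs G hlf μ₁ := gibbs A hA hinv a ha h0 hatop
  have g2 : IsUCGibbs G hlf μ₂ := gibbs Aᶜ hA.compl hinvc (1 - a) hac.symm h1a0 hactop
  have hdec : μ = a • μ₁ + (1 - a) • μ₂ := by
    rw [hμ₁, hμ₂, smul_smul, smul_smul, ENNReal.mul_inv_cancel h0 hatop,
      ENNReal.mul_inv_cancel h1a0 hactop, one_smul, one_smul,
      Measure.restrict_add_restrict_compl hA]
  have heq : μ₁ = μ₂ := hμ.2 μ₁ μ₂ g1 g2 a (pos_iff_ne_zero.mpr h0)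
    (lt_of_le_of_ne ha1 h1) hdec
  have e1 : μ₁ A = 1 := by
    rw [hμ₁, Measure.smul_apply, Measure.restrict_apply hA, Set.inter_self, smul_eq_mul,
      ← ha, ENNReal.inv_mul_cancel h0 hatop]
  have e2 : μ₂ A = 0 := by
    rw [hμ₂, Measure.smul_apply, Measure.restrict_apply hA, Set.inter_compl_self,
      measure_empty, smul_eq_mul, mul_zero]
  rw [heq, e2] at e1
  exact zero_ne_one e1

theorem cosetMeasure_extremal (hz : IsCycle G hlf z) :
    IsExtremalUCGibbs G hlf (cosetMeasure G hlf z) := by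
  refine ⟨cosetMeasure_gibbs G hlf z hz, ?_⟩
  intro μ₁ μ₂ h1 h2 t ht0 ht1 hdec
  haveI := h1.1
  haveI := h2.1
  have httop : t ≠ ∞ := (ht1.trans ENNReal.one_lt_top).ne
  have h1t : (1 : ℝ≥0∞) - t ≠ ∞ := (tsub_le_self.trans_lt ENNReal.one_lt_top).ne
  have hC := cosetMeasure_coset G hlf z
  have hsum : t * μ₁ (Coset G hlf z) + (1 - t) * μ₂ (Coset G hlf z) = 1 := by
    have h' : (t • μ₁ + (1 - t) • μ₂) (Coset G hlf z) = 1 := by rw [← hdec]; exact hC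
    simpa [Measure.add_apply, Measure.smul_apply, smul_eq_mul] using h'
  have key : ∀ (ν₁ ν₂ : Measure (V → V → ZMod q)), IsProbabilityMeasure ν₁ →
      IsProbabilityMeasure ν₂ → ∀ s : ℝ≥0∞, s ≠ 0 → s ≠ ∞ → s ≤ 1 →
      s * ν₁ (Coset G hlf z) + (1 - s) * ν₂ (Coset G hlf z) = 1 →
      ν₁ (Coset G hlf z) = 1 := by
    intro ν₁ ν₂ hp1 hp2 s hs0 hstop hs1 hsum
    by_contra hne
    have hlt : ν₁ (Coset G hlf z) < 1 := lt_of_le_of_ne prob_le_one hne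
    have hb1 : s * ν₁ (Coset G hlf z) < s * 1 :=
      ENNReal.mul_lt_mul_right hs0 hstop hlt
    have hb2 : (1 - s) * ν₂ (Coset G hlf z) ≤ (1 - s) * 1 :=
      mul_le_mul' le_rfl prob_le_one
    have : t * 0 = 0 := by simp
    have hstrict : s * ν₁ (Coset G hlf z) + (1 - s) * ν₂ (Coset G hlf z)
        < s * 1 + (1 - s) * 1 := by
      calc s * ν₁ (Coset G hlf z) + (1 - s) * ν₂ (Coset G hlf z)
          ≤ s * ν₁ (Coset G hlf z) + (1 - s) * 1 := by gcongr
        _ < s * 1 + (1 - s) * 1 := by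
            apply ENNReal.add_lt_add_right _ hb1
            simp only [mul_one]
            exact (tsub_le_self.trans_lt ENNReal.one_lt_top).ne
    rw [hsum, mul_one, mul_one, add_tsub_cancel_of_le hs1] at hstrict
    exact lt_irrefl _ hstrict
  have e1 : μ₁ (Coset G hlf z) = 1 :=
    key μ₁ μ₂ h1.1 h2.1 t (pos_iff_ne_zero.mp ht0) httop ht1.le hsum
  have e2 : μ₂ (Coset G hlf z) = 1 := by
    refine key μ₂ μ₁ h2.1 h1.1 (1 - t) ?_ h1t tsub_le_self ?_
    · intro h
      exact (lt_irrefl (1 : ℝ≥0∞)) (lt_of_le_of_lt (tsub_eq_zero_iff_le.mp h) ht1)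
    · rw [ENNReal.sub_sub_cancel ENNReal.one_ne_top ht1.le, add_comm]
      exact hsum
  rw [coset_unique G hlf z h1 e1, coset_unique G hlf z h2 e2]

theorem extremal_coset {μ : Measure (V → V → ZMod q)} (hμ : IsExtremalUCGibbs G hlf μ) :
    ∃ z : V → V → ZMod q, IsCycle G hlf z ∧ μ (Coset G hlf z) = 1 := by
  classical
  haveI := hμ.1.1
  set X := V → V → ZMod q with hX
  set Hs : Set X := (Hgrp (q := q) G hlf : Set X) with hHs
  have hHcomp : IsCompact Hs := (Hgrp_closed G hlf).isCompact
  have hHzero : (0 : X) ∈ Hs := (Hgrp (q := q) G hlf).zero_mem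
  haveI : Countable (countableBasis X) := (countable_countableBasis X).to_subtype
  set sat : countableBasis X → Set X := fun U => (U : Set X) + Hs with hsat
  have hsat_open : ∀ U, IsOpen (sat U) :=
    fun U => (isOpen_of_mem_countableBasis U.2).add_right
  have hsat_inv : ∀ U, ∀ η₀ ∈ FinCycles (q := q) G hlf,
      (fun η => η + η₀) ⁻¹' (sat U) = sat U := by
    intro U η₀ hη₀
    have hη₀H : η₀ ∈ Hgrp (q := q) G hlf :=
      AddSubgroup.le_topologicalClosure _ hη₀
    ext x
    simp only [Set.mem_preimage, hsat, Set.mem_add]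
    constructor
    · rintro ⟨u, hu, h, hh, heq⟩
      refine ⟨u, hu, h - η₀, (Hgrp (q := q) G hlf).sub_mem hh hη₀H, ?_⟩
      have : u + h = x + η₀ := heq
      have : u + (h - η₀) = x := by
        rw [add_sub_assoc']
        rw [this]
        abel
      exact this
    · rintro ⟨u, hu, h, hh, heq⟩
      refine ⟨u, hu, h + η₀, (Hgrp (q := q) G hlf).add_mem hh hη₀H, ?_⟩
      rw [← add_assoc, heq]
  have hsat01 : ∀ U, μ (sat U) = 0 ∨ μ (sat U) = 1 := fun U =>
    extremal_zero_one G hlf hμ (hsat_open U).measurableSet (hsat_inv U)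
  set S : countableBasis X → Set X :=
    fun U => if μ (sat U) = 1 then sat U else (sat U)ᶜ with hS
  have hS_meas : ∀ U, MeasurableSet (S U) := by
    intro U
    by_cases h : μ (sat U) = 1
    · rw [hS]; simp only [if_pos h]; exact (hsat_open U).measurableSet
    · rw [hS]; simp only [if_neg h]; exact (hsat_open U).measurableSet.compl
  have hS_null : ∀ U, μ (S U)ᶜ = 0 := by
    intro U
    by_cases h : μ (sat U) = 1
    · rw [hS]; simp only [if_pos h]
      exact (prob_compl_eq_zero_iff (hsat_open U).measurableSet).2 h
    · rw [hS]; simp only [if_neg h, compl_compl]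
      rcases hsat01 U with h0 | h1
      · exact h0
      · exact absurd h1 h
  set T : Set X := ⋂ U, S U with hT
  have hT_meas : MeasurableSet T := MeasurableSet.iInter hS_meas
  have hT_one : μ T = 1 := by
    rw [← prob_compl_eq_zero_iff hT_meas, hT, Set.compl_iInter]
    exact measure_iUnion_null fun U => hS_null U
  have hpair : ∀ x ∈ T, ∀ y ∈ T, y - x ∈ Hs := by
    intro x hx y hy
    by_contra hnot
    -- the cosets x + Hs and y + Hs are disjoint
    have hdisj : ({x} + Hs) ∩ ({y} + Hs) = ∅ := by
      rw [Set.eq_empty_iff_forall_notMem]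
      rintro w ⟨hw1, hw2⟩
      rw [Set.mem_add] at hw1 hw2
      obtain ⟨x', hx', h, hh, he⟩ := hw1
      obtain ⟨y', hy', h', hh', he'⟩ := hw2
      rw [Set.mem_singleton_iff] at hx' hy'
      rw [hx'] at he
      rw [hy'] at he'
      apply hnot
      have hxy : x + h = y + h' := he.trans he'.symm
      have hyx : y - x = h - h' := by
        have hy2 : y = x + h - h' := by rw [hxy]; abel
        rw [hy2]; abel
      rw [hyx]
      exact (Hgrp (q := q) G hlf).sub_mem hh hh'
    have hxK : IsCompact ({x} + Hs) := isCompact_singleton.add hHcomp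
    have hyC : IsClosed ({y} + Hs) := (isCompact_singleton.add hHcomp).isClosed
    have hsub : {x} + Hs ⊆ ({y} + Hs)ᶜ := by
      intro w hw hw'
      have : w ∈ ({x} + Hs) ∩ ({y} + Hs) := ⟨hw, hw'⟩
      rw [hdisj] at this
      exact this
    obtain ⟨W, hW, hWsub⟩ :=
      compact_open_separated_add_right hxK hyC.isOpen_compl hsub
    have hxW : {x} + W ∈ 𝓝 x := by
      rw [Set.singleton_add]
      have := (Homeomorph.addLeft x).isOpenMap.image_mem_nhds hW
      simpa using this
    obtain ⟨U, hUB, hxU, hUsub⟩ :=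
      (isBasis_countableBasis X).mem_nhds_iff.mp hxW
    have hsatsub : (U : Set X) + Hs ⊆ ({y} + Hs)ᶜ := by
      have h1 : (U : Set X) + Hs ⊆ ({x} + W) + Hs :=
        Set.add_subset_add_right hUsub
      have h2 : ({x} + W) + Hs = ({x} + Hs) + W := by
        rw [add_assoc, add_comm W Hs, ← add_assoc]
      exact fun w hw => hWsub (h2 ▸ h1 hw)
    set u : countableBasis X := ⟨U, hUB⟩ with hu
    have hxsat : x ∈ sat u := by
      rw [hsat]
      have := Set.add_mem_add hxU hHzero
      simpa using this
    have hysat : y ∉ sat u := by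
      intro hy'
      have : y ∈ ({y} + Hs)ᶜ := hsatsub hy'
      apply this
      have := Set.add_mem_add (Set.mem_singleton y) hHzero
      simpa using this
    by_cases hμU : μ (sat u) = 1
    · have : T ⊆ S u := Set.iInter_subset _ u
      have : y ∈ S u := this hy
      rw [hS] at this
      simp only [if_pos hμU] at this
      exact hysat this
    · have : T ⊆ S u := Set.iInter_subset _ u
      have : x ∈ S u := this hx
      rw [hS] at this
      simp only [if_neg hμU] at this
      exact this hxsat
  have hcyc0 : μ {η : X | IsCycle G hlf η}ᶜ = 0 :=
    (prob_compl_eq_zero_iff (cycles_measurable G hlf)).2 hμ.1.2.1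
  have hTC : μ (T ∩ {η : X | IsCycle G hlf η}) = 1 := by
    rw [measure_inter_conull hcyc0]
    exact hT_one
  obtain ⟨z, hzT, hzc⟩ := nonempty_of_measure_ne_zero (hTC.trans_ne one_ne_zero)
  refine ⟨z, hzc, ?_⟩
  have hTsub : T ⊆ Coset G hlf z := by
    intro w hw
    rw [coset_eq]
    exact hpair z hzT w hw
  refine le_antisymm prob_le_one ?_
  rw [← hT_one]
  exact measure_mono hTsub

end CM
end Concrete

/-- Extremal Gibbs measures of the uniform cycle model on an infinite locally finite
graph are in bijection with the cosets of the closure of the finitely supported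
cycles: each coset carries exactly one Gibbs measure, it is extremal, and every
extremal Gibbs measure gives full mass to exactly one coset. -/
theorem stmt15 (q : ℕ) (hq : 2 ≤ q) [Countable V] [Infinite V]
    (G : SimpleGraph V) (hlf : ∀ v : V, Fintype (G.neighborSet v)) :
    (∀ z : V → V → ZMod q, IsCycle (q := q) G hlf z →
      (∃ μ : Measure (V → V → ZMod q),
        (IsUCGibbs G hlf μ ∧ μ (Coset G hlf z) = 1 ∧ IsExtremalUCGibbs G hlf μ) ∧
        ∀ μ' : Measure (V → V → ZMod q),
          IsUCGibbs G hlf μ' → μ' (Coset G hlf z) = 1 → μ' = μ)) ∧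
    (∀ μ : Measure (V → V → ZMod q), IsUCGibbs G hlf μ →
      (IsExtremalUCGibbs G hlf μ ↔
        ∃ z : V → V → ZMod q, IsCycle (q := q) G hlf z ∧ μ (Coset G hlf z) = 1)) := by
  haveI : NeZero q := ⟨by omega⟩
  constructor
  · intro z hz
    exact ⟨cosetMeasure G hlf z,
      ⟨cosetMeasure_gibbs G hlf z hz, cosetMeasure_coset G hlf z,
        cosetMeasure_extremal G hlf z hz⟩,
      fun μ' h1 h2 => coset_unique G hlf z h1 h2⟩
  · intro μ hμ
    constructor
    · intro hext
      exact extremal_coset G hlf hext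
    · rintro ⟨z, hz, hzc⟩
      rw [coset_unique G hlf z hμ hzc]
      exact cosetMeasure_extremal G hlf z hz
end

section
/- If two probability measures μ on S^{E(ℤ^d)} and ν on T^{E(ℤ^d)} are exponentially ratio weak mixing, then the product measure μ ⊗ ν on (S × T)^{E(ℤ^d)} is exponentially ratio weak mixing. -/
open MeasureTheory

/-- The edges of `ℤ^d`, identified with pairs (vertex, direction). -/
def EdgeZd (d : ℕ) := (Fin d → ℤ) × Fin d

/-- The edge `e` lies inside the box `Λ_n` (both endpoints have all coordinates
of absolute value at most `n`). -/
def edgeInBox {d : ℕ} (n : ℕ) (e : EdgeZd d) : Prop :=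
  (∀ j, |e.1 j| ≤ (n : ℤ)) ∧
  (∀ j, |e.1 j + (if j = e.2 then 1 else 0)| ≤ (n : ℤ))

/-- The event `A` depends only on the edges in `W`. -/
def dependsOnE {d : ℕ} {S : Type*} (W : Set (EdgeZd d))
    (A : Set (EdgeZd d → S)) : Prop :=
  ∀ x y : EdgeZd d → S, (∀ e ∈ W, x e = y e) → (x ∈ A ↔ y ∈ A)

/-- `ρ` is exponentially ratio weak mixing: there are `c, C > 0` and `k ∈ ℕ, k > 0`
such that events supported in `Λ_n` and outside `Λ_{kn}` decorrelate up to a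
multiplicative error `C e^{-cn}`. -/
def RatioWeakMixing {d : ℕ} {S : Type*} [MeasurableSpace S]
    (ρ : Measure (EdgeZd d → S)) : Prop :=
  ∃ c C : ℝ, ∃ k : ℕ, 0 < c ∧ 0 < C ∧ 0 < k ∧
    ∀ n : ℕ, ∀ A B : Set (EdgeZd d → S), MeasurableSet A → MeasurableSet B →
      dependsOnE {e | edgeInBox n e} A → dependsOnE {e | ¬ edgeInBox (k * n) e} B →
      |(ρ (A ∩ B)).toReal - (ρ A).toReal * (ρ B).toReal|
        ≤ C * Real.exp (-(c * n)) * (ρ A).toReal * (ρ B).toReal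

open Set ENNReal

/-- Monotonicity of boxes. -/
lemma edgeInBox_mono {d : ℕ} {m m' : ℕ} (h : m ≤ m') {e : EdgeZd d}
    (he : edgeInBox m e) : edgeInBox m' e := by
  obtain ⟨h1, h2⟩ := he
  exact ⟨fun j => (h1 j).trans (by exact_mod_cast h),
    fun j => (h2 j).trans (by exact_mod_cast h)⟩

/-- Monotonicity of `dependsOnE`. -/
lemma depOn_mono {d : ℕ} {S : Type*} {W W' : Set (EdgeZd d)} (h : W ⊆ W')
    {A : Set (EdgeZd d → S)} (hA : dependsOnE W A) : dependsOnE W' A :=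
  fun x y hxy => hA x y fun e he => hxy e (h he)

/-- Layer-cake formula for `[0,1]`-valued `ℝ≥0∞` functions. -/
lemma layercake_ennreal {Y : Type*} [MeasurableSpace Y] (κ : Measure Y)
    {f : Y → ℝ≥0∞} (hf : Measurable f) (hf1 : ∀ y, f y ≤ 1) :
    ∫⁻ y, f y ∂κ = ∫⁻ t in Set.Ioi (0:ℝ), κ {y | ENNReal.ofReal t < f y} := by
  have h1 : ∀ y, f y ≠ ∞ := fun y => ne_top_of_le_ne_top one_ne_top (hf1 y)
  have h0 : ∫⁻ y, f y ∂κ = ∫⁻ y, ENNReal.ofReal ((f y).toReal) ∂κ :=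
    lintegral_congr fun y => (ENNReal.ofReal_toReal (h1 y)).symm
  rw [h0, lintegral_eq_lintegral_meas_lt κ (ae_of_all _ fun y => ENNReal.toReal_nonneg)
    hf.ennreal_toReal.aemeasurable]
  apply setLIntegral_congr_fun measurableSet_Ioi
  intro t ht
  dsimp only
  congr 1
  ext y
  simp only [Set.mem_setOf_eq]
  exact (ENNReal.ofReal_lt_iff_lt_toReal (le_of_lt ht) (h1 y)).symm

/-- From the real-valued ratio mixing inequality to two one-sided `ℝ≥0∞` bounds. -/
lemma ennreal_mixing_of_real {Y : Type*} [MeasurableSpace Y] (ν : Measure Y)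
    {A B : Set Y} (hA : ν A ≠ ∞) (hB : ν B ≠ ∞) (hAB : ν (A ∩ B) ≠ ∞) {r : ℝ}
    (h : |(ν (A ∩ B)).toReal - (ν A).toReal * (ν B).toReal|
      ≤ r * (ν A).toReal * (ν B).toReal) :
    ν (A ∩ B) ≤ ν A * ν B + ENNReal.ofReal r * (ν A * ν B) ∧
    ν A * ν B ≤ ν (A ∩ B) + ENNReal.ofReal r * (ν A * ν B) := by
  set x := (ν (A ∩ B)).toReal with hx
  set a := (ν A).toReal with ha
  set b := (ν B).toReal with hb
  have hxn : 0 ≤ x := ENNReal.toReal_nonneg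
  have han : 0 ≤ a := ENNReal.toReal_nonneg
  have hbn : 0 ≤ b := ENNReal.toReal_nonneg
  have habs := abs_le.mp h
  have e1 : ν (A ∩ B) = ENNReal.ofReal x := (ENNReal.ofReal_toReal hAB).symm
  have e2 : ν A * ν B = ENNReal.ofReal (a * b) := by
    rw [ENNReal.ofReal_mul han, ENNReal.ofReal_toReal hA, ENNReal.ofReal_toReal hB]
  constructor
  · rw [e1, e2, ← ENNReal.ofReal_mul' (mul_nonneg han hbn),
      ← ENNReal.ofReal_add (by positivity) (by nlinarith)]
    exact ENNReal.ofReal_le_ofReal (by nlinarith)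
  · rw [e1, e2, ← ENNReal.ofReal_mul' (mul_nonneg han hbn),
      ← ENNReal.ofReal_add hxn (by nlinarith)]
    exact ENNReal.ofReal_le_ofReal (by nlinarith)

/-- Ratio mixing for pairs of events upgrades to ratio mixing for pairs of
`[0,1]`-valued functions (by the layer-cake formula). -/
lemma fun_mixing {Y : Type*} [MeasurableSpace Y] (ν : Measure Y) [IsFiniteMeasure ν]
    {ε : ℝ≥0∞} (hε : ε ≠ ∞) {P Q : Set Y → Prop}
    (Hset : ∀ A B : Set Y, MeasurableSet A → MeasurableSet B → P A → Q B →
      ν (A ∩ B) ≤ ν A * ν B + ε * (ν A * ν B) ∧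
      ν A * ν B ≤ ν (A ∩ B) + ε * (ν A * ν B))
    {f g : Y → ℝ≥0∞} (hf : Measurable f) (hg : Measurable g)
    (hf1 : ∀ y, f y ≤ 1) (hg1 : ∀ y, g y ≤ 1)
    (hPf : ∀ t : ℝ, P {y | ENNReal.ofReal t < f y})
    (hQg : ∀ s : ℝ, Q {y | ENNReal.ofReal s < g y}) :
    (∫⁻ y, f y * g y ∂ν ≤ (∫⁻ y, f y ∂ν) * ∫⁻ y, g y ∂ν
        + ε * ((∫⁻ y, f y ∂ν) * ∫⁻ y, g y ∂ν)) ∧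
    ((∫⁻ y, f y ∂ν) * ∫⁻ y, g y ∂ν ≤ ∫⁻ y, f y * g y ∂ν
        + ε * ((∫⁻ y, f y ∂ν) * ∫⁻ y, g y ∂ν)) := by
  set A : ℝ → Set Y := fun t => {y | ENNReal.ofReal t < f y} with hAdef
  set B : ℝ → Set Y := fun s => {y | ENNReal.ofReal s < g y} with hBdef
  have hAm : ∀ t, MeasurableSet (A t) := fun t => hf measurableSet_Ioi
  have hBm : ∀ s, MeasurableSet (B s) := fun s => hg measurableSet_Ioi
  have hνA : Measurable fun t : ℝ => ν (A t) :=
    Antitone.measurable (fun t t' htt' => measure_mono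
      (fun y hy => lt_of_le_of_lt (ENNReal.ofReal_le_ofReal htt') hy))
  have hνB : Measurable fun s : ℝ => ν (B s) :=
    Antitone.measurable (fun t t' htt' => measure_mono
      (fun y hy => lt_of_le_of_lt (ENNReal.ofReal_le_ofReal htt') hy))
  have h1ε : (1 : ℝ≥0∞) + ε ≠ ∞ := by
    simp [ENNReal.add_ne_top, hε]
  have hgint : ∫⁻ y, g y ∂ν ≠ ∞ := by
    refine ne_top_of_le_ne_top (measure_ne_top ν univ) ?_
    calc ∫⁻ y, g y ∂ν ≤ ∫⁻ _, 1 ∂ν := lintegral_mono hg1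
    _ = ν univ := lintegral_one
  have I2 : ∫⁻ y, f y ∂ν = ∫⁻ t in Set.Ioi (0:ℝ), ν (A t) := layercake_ennreal ν hf hf1
  have I3 : ∫⁻ y, g y ∂ν = ∫⁻ s in Set.Ioi (0:ℝ), ν (B s) := layercake_ennreal ν hg hg1
  have hc : ∫⁻ s in Set.Ioi (0:ℝ), ν (B s) ≠ ∞ := I3 ▸ hgint
  have I1 : ∫⁻ y, f y * g y ∂ν
      = ∫⁻ t in Set.Ioi (0:ℝ), ∫⁻ s in Set.Ioi (0:ℝ), ν (A t ∩ B s) := by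
    have hgf : ∫⁻ y, f y * g y ∂ν = ∫⁻ y, f y ∂(ν.withDensity g) := by
      rw [lintegral_withDensity_eq_lintegral_mul ν hg hf]
      exact lintegral_congr fun y => mul_comm _ _
    rw [hgf, layercake_ennreal (ν.withDensity g) hf hf1]
    refine lintegral_congr fun t => ?_
    rw [show {y | ENNReal.ofReal t < f y} = A t from rfl, withDensity_apply g (hAm t),
      layercake_ennreal (ν.restrict (A t)) hg hg1]
    refine lintegral_congr fun s => ?_
    rw [show {y | ENNReal.ofReal s < g y} = B s from rfl, Measure.restrict_apply (hBm s),
      Set.inter_comm]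
  have I4 : (∫⁻ y, f y ∂ν) * ∫⁻ y, g y ∂ν
      = ∫⁻ t in Set.Ioi (0:ℝ), ∫⁻ s in Set.Ioi (0:ℝ), ν (A t) * ν (B s) := by
    rw [I2, I3, ← lintegral_mul_const' _ _ hc]
    exact lintegral_congr fun t => (lintegral_const_mul' _ _ (measure_ne_top ν _)).symm
  constructor
  · calc ∫⁻ y, f y * g y ∂ν
        = ∫⁻ t in Set.Ioi (0:ℝ), ∫⁻ s in Set.Ioi (0:ℝ), ν (A t ∩ B s) := I1
      _ ≤ ∫⁻ t in Set.Ioi (0:ℝ), ∫⁻ s in Set.Ioi (0:ℝ), (1 + ε) * (ν (A t) * ν (B s)) := by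
          refine lintegral_mono fun t => lintegral_mono fun s => ?_
          have h := (Hset (A t) (B s) (hAm t) (hBm s) (hPf t) (hQg s)).1
          calc ν (A t ∩ B s) ≤ ν (A t) * ν (B s) + ε * (ν (A t) * ν (B s)) := h
            _ = (1 + ε) * (ν (A t) * ν (B s)) := by ring
      _ = (1 + ε) * ((∫⁻ y, f y ∂ν) * ∫⁻ y, g y ∂ν) := by
          rw [I4]
          rw [← lintegral_const_mul' (1 + ε) _ h1ε]
          exact lintegral_congr fun t => lintegral_const_mul' (1 + ε) _ h1ε
      _ = (∫⁻ y, f y ∂ν) * ∫⁻ y, g y ∂ν + ε * ((∫⁻ y, f y ∂ν) * ∫⁻ y, g y ∂ν) := by ring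
  · calc (∫⁻ y, f y ∂ν) * ∫⁻ y, g y ∂ν
        = ∫⁻ t in Set.Ioi (0:ℝ), ∫⁻ s in Set.Ioi (0:ℝ), ν (A t) * ν (B s) := I4
      _ ≤ ∫⁻ t in Set.Ioi (0:ℝ), ∫⁻ s in Set.Ioi (0:ℝ),
            (ν (A t ∩ B s) + ε * (ν (A t) * ν (B s))) := by
          refine lintegral_mono fun t => lintegral_mono fun s => ?_
          exact (Hset (A t) (B s) (hAm t) (hBm s) (hPf t) (hQg s)).2
      _ = ∫⁻ t in Set.Ioi (0:ℝ), ((∫⁻ s in Set.Ioi (0:ℝ), ν (A t ∩ B s))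
            + ε * (ν (A t) * ∫⁻ s in Set.Ioi (0:ℝ), ν (B s))) := by
          refine lintegral_congr fun t => ?_
          rw [lintegral_add_right _ ((hνB.const_mul (ν (A t))).const_mul ε)]
          congr 1
          rw [lintegral_const_mul' ε _ hε, lintegral_const_mul' (ν (A t)) _ (measure_ne_top ν _)]
      _ = (∫⁻ t in Set.Ioi (0:ℝ), ∫⁻ s in Set.Ioi (0:ℝ), ν (A t ∩ B s))
            + ∫⁻ t in Set.Ioi (0:ℝ), ε * (ν (A t) * ∫⁻ s in Set.Ioi (0:ℝ), ν (B s)) := by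
          rw [lintegral_add_right _ ((hνA.mul_const _).const_mul ε)]
      _ = ∫⁻ y, f y * g y ∂ν + ε * ((∫⁻ y, f y ∂ν) * ∫⁻ y, g y ∂ν) := by
          rw [← I1]
          congr 1
          rw [lintegral_const_mul' ε _ hε, lintegral_mul_const' _ _ hc, ← I2, ← I3]

/-- Products of exponentially ratio weak mixing measures are exponentially ratio
weak mixing. -/
theorem stmt17 {d : ℕ} {S T : Type*} [MeasurableSpace S] [MeasurableSpace T]
    (μ : Measure (EdgeZd d → S)) (ν : Measure (EdgeZd d → T))
    [IsProbabilityMeasure μ] [IsProbabilityMeasure ν]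
    (hμ : RatioWeakMixing μ) (hν : RatioWeakMixing ν) :
    RatioWeakMixing
      (Measure.map
        (fun p : (EdgeZd d → S) × (EdgeZd d → T) => fun e => (p.1 e, p.2 e))
        (μ.prod ν)) := by
  obtain ⟨cμ, Cμ, kμ, hcμ, hCμ, hkμ, Hμ⟩ := hμ
  obtain ⟨cν, Cν, kν, hcν, hCν, hkν, Hν⟩ := hν
  set φ : (EdgeZd d → S) × (EdgeZd d → T) → EdgeZd d → S × T :=
    fun p => fun e => (p.1 e, p.2 e) with hφdef
  have hφ : Measurable φ := measurable_pi_lambda _ fun e =>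
    ((measurable_pi_apply e).comp measurable_fst).prodMk
      ((measurable_pi_apply e).comp measurable_snd)
  set ρ := Measure.map φ (μ.prod ν) with hρdef
  have hρprob : IsProbabilityMeasure ρ := Measure.isProbabilityMeasure_map hφ.aemeasurable
  refine ⟨min cμ cν, Cμ + Cν + Cμ * Cν, max kμ kν, lt_min hcμ hcν,
    add_pos (add_pos hCμ hCν) (mul_pos hCμ hCν), lt_max_iff.mpr (Or.inl hkμ), ?_⟩
  intro n A B hAmeas hBmeas hA hB
  -- sections
  set f : (EdgeZd d → T) → ℝ≥0∞ := fun y => μ ((fun x => (x, y)) ⁻¹' (φ ⁻¹' A)) with hfdef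
  set g : (EdgeZd d → T) → ℝ≥0∞ := fun y => μ ((fun x => (x, y)) ⁻¹' (φ ⁻¹' B)) with hgdef
  have hfm : Measurable f := measurable_measure_prodMk_right (hφ hAmeas)
  have hgm : Measurable g := measurable_measure_prodMk_right (hφ hBmeas)
  have hf1 : ∀ y, f y ≤ 1 := fun y => prob_le_one
  have hg1 : ∀ y, g y ≤ 1 := fun y => prob_le_one
  have hsecAmeas : ∀ y, MeasurableSet ((fun x => (x, y)) ⁻¹' (φ ⁻¹' A)) :=
    fun y => measurable_prodMk_right (hφ hAmeas)
  have hsecBmeas : ∀ y, MeasurableSet ((fun x => (x, y)) ⁻¹' (φ ⁻¹' B)) :=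
    fun y => measurable_prodMk_right (hφ hBmeas)
  -- sections inherit the dependence structure
  have hsec : ∀ (W : Set (EdgeZd d)) (C : Set (EdgeZd d → S × T)), dependsOnE W C →
      ∀ y : EdgeZd d → T,
        dependsOnE W (((fun x => (x, y)) ⁻¹' (φ ⁻¹' C)) : Set (EdgeZd d → S)) := by
    intro W C hC y x x' hxx'
    exact hC (φ (x, y)) (φ (x', y)) fun e he => by
      simp only [hφdef]
      rw [hxx' e he]
  have hsec2 : ∀ (W : Set (EdgeZd d)) (C : Set (EdgeZd d → S × T)), dependsOnE W C →
      ∀ y y' : EdgeZd d → T, (∀ e ∈ W, y e = y' e) →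
        ((fun x => (x, y)) ⁻¹' (φ ⁻¹' C)) = ((fun x => (x, y')) ⁻¹' (φ ⁻¹' C)) := by
    intro W C hC y y' hyy'
    ext x
    exact hC (φ (x, y)) (φ (x, y')) fun e he => by
      simp only [hφdef]
      rw [hyy' e he]
  -- dependence transfers with smaller boxes
  have subμ : {e : EdgeZd d | ¬ edgeInBox (max kμ kν * n) e}
      ⊆ {e | ¬ edgeInBox (kμ * n) e} := fun e he hbox =>
    he (edgeInBox_mono (Nat.mul_le_mul_right n (le_max_left _ _)) hbox)
  have subν : {e : EdgeZd d | ¬ edgeInBox (max kμ kν * n) e}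
      ⊆ {e | ¬ edgeInBox (kν * n) e} := fun e he hbox =>
    he (edgeInBox_mono (Nat.mul_le_mul_right n (le_max_right _ _)) hbox)
  -- constants
  set rμ : ℝ := Cμ * Real.exp (-(cμ * n)) with hrμ
  set rν : ℝ := Cν * Real.exp (-(cν * n)) with hrν
  set rE : ℝ := (Cμ + Cν + Cμ * Cν) * Real.exp (-(min cμ cν * n)) with hrE
  set εμ : ℝ≥0∞ := ENNReal.ofReal rμ with hεμ
  set εν : ℝ≥0∞ := ENNReal.ofReal rν with hεν
  set E : ℝ≥0∞ := ENNReal.ofReal rE with hE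
  have hrμ0 : 0 ≤ rμ := by positivity
  have hrν0 : 0 ≤ rν := by positivity
  have hrE0 : 0 ≤ rE := by
    have : (0:ℝ) < Cμ + Cν + Cμ * Cν := add_pos (add_pos hCμ hCν) (mul_pos hCμ hCν)
    positivity
  have hεμtop : εμ ≠ ∞ := ENNReal.ofReal_ne_top
  have hεν_top : εν ≠ ∞ := ENNReal.ofReal_ne_top
  have hEtop : E ≠ ∞ := ENNReal.ofReal_ne_top
  -- sum of errors is bounded by the target error
  have hsumE : εμ + εν + εμ * εν ≤ E := by
    rw [hεμ, hεν, hE, ← ENNReal.ofReal_mul hrμ0, ← ENNReal.ofReal_add hrμ0 hrν0,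
      ← ENNReal.ofReal_add (by positivity) (by positivity)]
    apply ENNReal.ofReal_le_ofReal
    have h1 : Real.exp (-(cμ * n)) ≤ Real.exp (-(min cμ cν * n)) := by
      apply Real.exp_le_exp.mpr
      have : min cμ cν * n ≤ cμ * n := by
        apply mul_le_mul_of_nonneg_right (min_le_left _ _) (by positivity)
      linarith
    have h2 : Real.exp (-(cν * n)) ≤ Real.exp (-(min cμ cν * n)) := by
      apply Real.exp_le_exp.mpr
      have : min cμ cν * n ≤ cν * n := by
        apply mul_le_mul_of_nonneg_right (min_le_right _ _) (by positivity)
      linarith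
    have h3 : Real.exp (-(cν * n)) ≤ 1 := by
      apply Real.exp_le_one_iff.mpr
      have : (0:ℝ) ≤ cν * n := by positivity
      linarith
    have h4 : (0:ℝ) < Real.exp (-(cμ * n)) := Real.exp_pos _
    have h5 : (0:ℝ) < Real.exp (-(cν * n)) := Real.exp_pos _
    rw [hrμ, hrν, hrE]
    have hmm : Real.exp (-(cμ * n)) * Real.exp (-(cν * n))
        ≤ Real.exp (-(min cμ cν * n)) := by
      nlinarith [mul_le_mul h1 h3 h5.le (Real.exp_pos (-(min cμ cν * n))).le]
    have t1 : Cμ * Real.exp (-(cμ * n)) ≤ Cμ * Real.exp (-(min cμ cν * n)) :=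
      mul_le_mul_of_nonneg_left h1 hCμ.le
    have t2 : Cν * Real.exp (-(cν * n)) ≤ Cν * Real.exp (-(min cμ cν * n)) :=
      mul_le_mul_of_nonneg_left h2 hCν.le
    have t3 : Cμ * Real.exp (-(cμ * n)) * (Cν * Real.exp (-(cν * n)))
        ≤ Cμ * Cν * Real.exp (-(min cμ cν * n)) := by
      calc Cμ * Real.exp (-(cμ * n)) * (Cν * Real.exp (-(cν * n)))
          = Cμ * Cν * (Real.exp (-(cμ * n)) * Real.exp (-(cν * n))) := by ring
        _ ≤ Cμ * Cν * Real.exp (-(min cμ cν * n)) :=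
            mul_le_mul_of_nonneg_left hmm (by positivity)
    nlinarith [t1, t2, t3]
  -- measure identities via sections
  have hmapA : ρ A = ∫⁻ y, f y ∂ν := by
    rw [hρdef, Measure.map_apply hφ hAmeas, Measure.prod_apply_symm (hφ hAmeas)]
  have hmapB : ρ B = ∫⁻ y, g y ∂ν := by
    rw [hρdef, Measure.map_apply hφ hBmeas, Measure.prod_apply_symm (hφ hBmeas)]
  have hmapAB : ρ (A ∩ B) = ∫⁻ y, μ (((fun x => (x, y)) ⁻¹' (φ ⁻¹' A))
      ∩ ((fun x => (x, y)) ⁻¹' (φ ⁻¹' B))) ∂ν := by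
    rw [hρdef, Measure.map_apply hφ (hAmeas.inter hBmeas),
      Measure.prod_apply_symm (hφ (hAmeas.inter hBmeas))]
    exact lintegral_congr fun y => by rw [Set.preimage_inter, Set.preimage_inter]
  -- pointwise μ-mixing for the sections
  have hμpt : ∀ y, μ (((fun x => (x, y)) ⁻¹' (φ ⁻¹' A)) ∩ ((fun x => (x, y)) ⁻¹' (φ ⁻¹' B)))
      ≤ f y * g y + εμ * (f y * g y) ∧
      f y * g y ≤ μ (((fun x => (x, y)) ⁻¹' (φ ⁻¹' A)) ∩ ((fun x => (x, y)) ⁻¹' (φ ⁻¹' B)))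
        + εμ * (f y * g y) := by
    intro y
    exact ennreal_mixing_of_real μ (measure_ne_top μ _) (measure_ne_top μ _)
      (measure_ne_top μ _)
      (Hμ n _ _ (hsecAmeas y) (hsecBmeas y) (hsec _ A hA y)
        (hsec _ B (depOn_mono subμ hB) y))
  -- ν-mixing for the functions f and g
  have hfun := fun_mixing ν hεν_top
    (P := dependsOnE {e : EdgeZd d | edgeInBox n e})
    (Q := dependsOnE {e : EdgeZd d | ¬ edgeInBox (kν * n) e})
    (fun A' B' hA'm hB'm hA' hB' =>
      ennreal_mixing_of_real ν (measure_ne_top ν _) (measure_ne_top ν _)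
        (measure_ne_top ν _) (Hν n A' B' hA'm hB'm hA' hB'))
    hfm hgm hf1 hg1
    (fun t y y' hyy' => by
      simp only [Set.mem_setOf_eq, hfdef]
      rw [hsec2 _ A hA y y' hyy'])
    (fun s y y' hyy' => by
      simp only [Set.mem_setOf_eq, hgdef]
      rw [hsec2 _ B (depOn_mono subν hB) y y' hyy'])
  -- notation for the three main quantities
  set IF : ℝ≥0∞ := ∫⁻ y, f y ∂ν with hIF
  set IG : ℝ≥0∞ := ∫⁻ y, g y ∂ν with hIG
  set IFG : ℝ≥0∞ := ∫⁻ y, f y * g y ∂ν with hIFG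
  have hIFGle : IFG ≤ IF * IG + εν * (IF * IG) := hfun.1
  have hIFIGle : IF * IG ≤ IFG + εν * (IF * IG) := hfun.2
  -- upper bound
  have hup : ρ (A ∩ B) ≤ ρ A * ρ B + E * (ρ A * ρ B) := by
    rw [hmapA, hmapB, hmapAB]
    calc ∫⁻ y, μ (((fun x => (x, y)) ⁻¹' (φ ⁻¹' A)) ∩ ((fun x => (x, y)) ⁻¹' (φ ⁻¹' B))) ∂ν
        ≤ ∫⁻ y, (1 + εμ) * (f y * g y) ∂ν := by
          refine lintegral_mono fun y => ?_
          calc μ _ ≤ f y * g y + εμ * (f y * g y) := (hμpt y).1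
            _ = (1 + εμ) * (f y * g y) := by ring
      _ = (1 + εμ) * IFG := lintegral_const_mul' _ _ (by simp [ENNReal.add_ne_top, hεμtop])
      _ ≤ (1 + εμ) * (IF * IG + εν * (IF * IG)) := mul_le_mul_right hIFGle _
      _ = IF * IG + (εμ + εν + εμ * εν) * (IF * IG) := by ring
      _ ≤ IF * IG + E * (IF * IG) := add_le_add_right (mul_le_mul_left hsumE _) _
  -- lower bound
  have hlow : ρ A * ρ B ≤ ρ (A ∩ B) + E * (ρ A * ρ B) := by
    rw [hmapA, hmapB, hmapAB]
    have hstep : IFG ≤ (∫⁻ y, μ (((fun x => (x, y)) ⁻¹' (φ ⁻¹' A))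
        ∩ ((fun x => (x, y)) ⁻¹' (φ ⁻¹' B))) ∂ν) + εμ * IFG := by
      calc IFG ≤ ∫⁻ y, (μ (((fun x => (x, y)) ⁻¹' (φ ⁻¹' A))
            ∩ ((fun x => (x, y)) ⁻¹' (φ ⁻¹' B))) + εμ * (f y * g y)) ∂ν := by
            rw [hIFG]
            exact lintegral_mono fun y => (hμpt y).2
        _ = (∫⁻ y, μ (((fun x => (x, y)) ⁻¹' (φ ⁻¹' A))
            ∩ ((fun x => (x, y)) ⁻¹' (φ ⁻¹' B))) ∂ν) + εμ * IFG := by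
            rw [lintegral_add_right _ (show Measurable fun y => εμ * (f y * g y) from (hfm.mul hgm).const_mul εμ),
              lintegral_const_mul' εμ _ hεμtop, hIFG]
    have hIFGle2 : IFG ≤ (1 + εν) * (IF * IG) := by
      calc IFG ≤ IF * IG + εν * (IF * IG) := hIFGle
        _ = (1 + εν) * (IF * IG) := by ring
    calc IF * IG ≤ IFG + εν * (IF * IG) := hIFIGle
      _ ≤ ((∫⁻ y, μ (((fun x => (x, y)) ⁻¹' (φ ⁻¹' A))
            ∩ ((fun x => (x, y)) ⁻¹' (φ ⁻¹' B))) ∂ν) + εμ * IFG) + εν * (IF * IG) :=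
          add_le_add_left hstep _
      _ ≤ ((∫⁻ y, μ (((fun x => (x, y)) ⁻¹' (φ ⁻¹' A))
            ∩ ((fun x => (x, y)) ⁻¹' (φ ⁻¹' B))) ∂ν) + εμ * ((1 + εν) * (IF * IG)))
            + εν * (IF * IG) :=
          add_le_add_left (add_le_add_right (mul_le_mul_right hIFGle2 _) _) _
      _ = (∫⁻ y, μ (((fun x => (x, y)) ⁻¹' (φ ⁻¹' A))
            ∩ ((fun x => (x, y)) ⁻¹' (φ ⁻¹' B))) ∂ν)
            + (εμ + εν + εμ * εν) * (IF * IG) := by ring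
      _ ≤ (∫⁻ y, μ (((fun x => (x, y)) ⁻¹' (φ ⁻¹' A))
            ∩ ((fun x => (x, y)) ⁻¹' (φ ⁻¹' B))) ∂ν) + E * (IF * IG) :=
          add_le_add_right (mul_le_mul_left hsumE _) _
  -- convert back to the real statement
  have hPfin : ρ A * ρ B ≠ ∞ := ENNReal.mul_ne_top (measure_ne_top ρ _) (measure_ne_top ρ _)
  have hABfin : ρ (A ∩ B) ≠ ∞ := measure_ne_top ρ _
  have hEP : (E * (ρ A * ρ B)).toReal = rE * ((ρ A).toReal * (ρ B).toReal) := by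
    rw [ENNReal.toReal_mul, ENNReal.toReal_mul, hE, ENNReal.toReal_ofReal hrE0]
  have hup' : (ρ (A ∩ B)).toReal ≤ (ρ A).toReal * (ρ B).toReal
      + rE * ((ρ A).toReal * (ρ B).toReal) := by
    have := (ENNReal.toReal_le_toReal hABfin
      (by exact ENNReal.add_ne_top.mpr ⟨hPfin, ENNReal.mul_ne_top hEtop hPfin⟩)).mpr hup
    rwa [ENNReal.toReal_add hPfin (ENNReal.mul_ne_top hEtop hPfin), hEP,
      ENNReal.toReal_mul] at this
  have hlow' : (ρ A).toReal * (ρ B).toReal ≤ (ρ (A ∩ B)).toReal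
      + rE * ((ρ A).toReal * (ρ B).toReal) := by
    have := (ENNReal.toReal_le_toReal hPfin
      (by exact ENNReal.add_ne_top.mpr ⟨hABfin, ENNReal.mul_ne_top hEtop hPfin⟩)).mpr hlow
    rwa [ENNReal.toReal_add hABfin (ENNReal.mul_ne_top hEtop hPfin), hEP,
      ENNReal.toReal_mul] at this
  rw [abs_le]
  constructor
  · have : rE * ((ρ A).toReal * (ρ B).toReal)
        = (Cμ + Cν + Cμ * Cν) * Real.exp (-(min cμ cν * n)) * (ρ A).toReal * (ρ B).toReal := by
      rw [hrE]; ring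
    linarith [hlow']
  · have : rE * ((ρ A).toReal * (ρ B).toReal)
        = (Cμ + Cν + Cμ * Cν) * Real.exp (-(min cμ cν * n)) * (ρ A).toReal * (ρ B).toReal := by
      rw [hrE]; ring
    linarith [hup']
end
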